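/- arXiv:math/0210108 — 5 statements merged into one kernel-verified Lean document; each statement's English description precedes it below -/
import Mathlib

section
/- Let p be a prime and λ a partition with a(λ) the number of nodes in the p-rim of λ, and j(λ) = |λ| − |J(λ)|. Then j(λ) = a(λ) − λ₁ if p divides a(λ), and j(λ) = a(λ) + 1 − λ₁ otherwise. -/
namespace Mullineux

/-- The rim of a partition (given as its list of parts, top row first; nodes `(i,j)` with
row index `i` starting at `0` and column index `j` starting at `1`), listed in the order
obtained by reading along the rim from left to right (i.e. from the bottom-left node
to the top-right node). -/
def rimList (l : List ℕ) : List (ℕ × ℕ) :=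
  ((List.range l.length).reverse).flatMap (fun i =>
    (List.range' (max (l.getD (i+1) 0) 1) (l.getD i 0 + 1 - max (l.getD (i+1) 0) 1)).map
      (fun j => (i, j)))

/-- Auxiliary function computing the list of `p`-segments of a list of rim nodes
(read from left to right): take `p` nodes, then continue from the column strictly to
the right of the rightmost node taken so far. -/
def segsAux (p : ℕ) : ℕ → List (ℕ × ℕ) → List (List (ℕ × ℕ))
  | 0, _ => []
  | _ + 1, [] => []
  | fuel + 1, L =>
      let s := L.take p
      let c := ((s.getLast?).map Prod.snd).getD 0
      s :: segsAux p fuel ((L.drop p).filter (fun q => c < q.2))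

/-- The `p`-segments of the rim of the partition `l`. -/
def segs (p : ℕ) (l : List ℕ) : List (List (ℕ × ℕ)) :=
  segsAux p (rimList l).length (rimList l)

/-- The `p`-rim of the partition `l`: the union of the `p`-segments of its rim. -/
def pRim (p : ℕ) (l : List ℕ) : List (ℕ × ℕ) := (segs p l).flatten

/-- `a(λ)`: the number of nodes in the `p`-rim of `λ`. -/
def aNum (p : ℕ) (l : List ℕ) : ℕ := (pRim p l).length

/-- The final (i.e. `p`-th) nodes of the `p`-segments having exactly `p` nodes. -/
def segEnds (p : ℕ) (l : List ℕ) : List (ℕ × ℕ) :=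
  (segs p l).filterMap (fun s => if s.length = p then s.getLast? else none)

/-- `J(λ)`: delete from `λ` every node of the `p`-rim which is the rightmost node of its
row but is not the `p`-th node of a `p`-segment. -/
def Jmap (p : ℕ) (l : List ℕ) : List ℕ :=
  (List.range l.length).map (fun i =>
    let li := l.getD i 0
    if (i, li) ∈ pRim p l ∧ (i, li) ∉ segEnds p l then li - 1 else li)

/-- `j(λ) = |λ| - |J(λ)|`. -/
def jNum (p : ℕ) (l : List ℕ) : ℕ := l.sum - (Jmap p l).sum

/-- A partition, encoded as a weakly decreasing list of natural numbers
(trailing zeros allowed). -/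
def IsPartition (l : List ℕ) : Prop := l.Pairwise (· ≥ ·)

/-- A `p`-restricted partition: `λ_i - λ_{i+1} < p` for all `i`. -/
def IsRestricted (p : ℕ) (l : List ℕ) : Prop :=
  IsPartition l ∧ ∀ i, l.getD i 0 < l.getD (i+1) 0 + p

/-- Removing the whole `p`-rim of `λ` (used in forming the Mullineux symbol). -/
def rimRemove (p : ℕ) (l : List ℕ) : List ℕ :=
  (List.range l.length).map (fun i =>
    l.getD i 0 - ((pRim p l).filter (fun q => q.1 = i)).length)

/-- The `i`-th part (with `i` starting from `0`) of the Mullineux conjugate of `λ`,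
as computed by Xu's algorithm: `j(J^i(λ))`. -/
def xuPart (p : ℕ) (l : List ℕ) (i : ℕ) : ℕ := jNum p ((Jmap p)^[i] l)

/-- The Mullineux conjugate of `λ`, as computed by Xu's algorithm (padded with
trailing zeros to length `|λ|`). -/
def xuM (p : ℕ) (l : List ℕ) : List ℕ := (List.range l.sum).map (xuPart p l)

/-- `μ` has the Mullineux symbol prescribed by `λ`: for every `i ≥ 0`, writing
`λ⁽ⁱ⁾` (resp. `μ⁽ⁱ⁾`) for the result of removing the `p`-rim `i` times, the numbers of
`p`-rim nodes agree, `a_i := a(λ⁽ⁱ⁾) = a(μ⁽ⁱ⁾)`, and the first row of `μ⁽ⁱ⁾` is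
`s_i = a_i - r_i` if `p ∣ a_i` and `a_i + 1 - r_i` otherwise, where `r_i` is the first
row of `λ⁽ⁱ⁾`. -/
def IsMullineuxConjugate (p : ℕ) (l mu : List ℕ) : Prop :=
  ∀ i : ℕ,
    aNum p ((rimRemove p)^[i] l) = aNum p ((rimRemove p)^[i] mu) ∧
    (((rimRemove p)^[i] mu).getD 0 0 : ℤ) =
      (if (p : ℤ) ∣ (aNum p ((rimRemove p)^[i] l) : ℤ)
       then (aNum p ((rimRemove p)^[i] l) : ℤ) - (((rimRemove p)^[i] l).getD 0 0 : ℤ)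
       else (aNum p ((rimRemove p)^[i] l) : ℤ) + 1 - (((rimRemove p)^[i] l).getD 0 0 : ℤ))

/-- The sequence `x_m, x_{m-1}, …, x_1` (as a list `[x_1,…,x_m]`) defined recursively
downwards by `x_i = 0` if `p ∣ λ_i + x_{i+1} + ⋯ + x_m` and `x_i = 1` otherwise. -/
def xSeq (p : ℕ) : List ℕ → List ℕ
  | [] => []
  | a :: rest =>
      let xs := xSeq p rest
      (if p ∣ (a + xs.sum) then 0 else 1) :: xs

end Mullineux

/-!
Read the rim from its bottom-left node, in column `1`, to its top-right node `(0, λ₁)`: each step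
goes up from a node ending its row and right from any other node. Along a stretch of the rim the
nodes not ending their row therefore count the columns gained, so a `p`-segment `s` running from
`x` to `z` contains `|s| + x₂ - z₂ - 1` nodes deleted by `J`, plus one if it is the last segment and
is not full (the last segment ends in column `λ₁` at a row end, which `J` keeps only if it is a
`p`-th node). The next segment starts in column `z₂ + 1`, so the counts telescope to `a(λ) - λ₁`,
plus one exactly when `p ∤ a(λ)`. As `J` deletes at most one node per row, `j(λ)` is this count.
-/

namespace Mullineux

open List

theorem IsSuffix.getLast?_eq {α : Type*} {l₁ l₂ : List α} (h : l₁ <:+ l₂) (hne : l₁ ≠ []) :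
    l₁.getLast? = l₂.getLast? := by
  obtain ⟨w, hw⟩ := Option.isSome_iff_exists.mp (getLast?_isSome.mpr hne)
  rw [hw]
  exact (singleton_suffix_iff_getLast?_eq_some.mp
    ((singleton_suffix_iff_getLast?_eq_some.mpr hw).trans h)).symm

theorem getLast?_cons_eq_getLast?_append {α : Type*} {s D : List α} {z : α}
    (hz : s.getLast? = some z) : (z :: D).getLast? = (s ++ D).getLast? := by
  rw [getLast?_append, hz, getLast?_cons]
  cases D.getLast? <;> rfl

theorem isChain_cons_of_isChain_append {α : Type*} {R : α → α → Prop} {s D : List α} {z : α}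
    (h : IsChain R (s ++ D)) (hz : s.getLast? = some z) : IsChain R (z :: D) := by
  rw [isChain_append] at h
  exact isChain_cons.mpr ⟨h.2.2 z hz, h.2.1⟩

theorem countP_and_ne_getLast_add {α : Type*} [DecidableEq α] (Q : α → Prop) [DecidablePred Q]
    {s : List α} {z : α} (hnd : s.Nodup) (hz : s.getLast? = some z) :
    s.countP (fun q => Q q ∧ q ≠ z) + (if Q z then 1 else 0) = s.countP Q := by
  obtain ⟨s', rfl⟩ := getLast?_eq_some_iff.mp hz
  have hzs' : z ∉ s' := by
    rw [nodup_append] at hnd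
    exact fun h => hnd.2.2 z h z (mem_singleton_self z) rfl
  have hs' : s'.countP (fun q => Q q ∧ q ≠ z) = s'.countP Q :=
    countP_congr fun q hq => by simp [show q ≠ z from fun h => hzs' (h ▸ hq)]
  rw [countP_append, countP_append, hs']
  simp

theorem countP_flatten_not_mem_filterMap {α : Type*} [DecidableEq α] (Q : α → Prop)
    [DecidablePred Q] (f : List α → Option α) (hf : ∀ s, ∀ a ∈ f s, a ∈ s) :
    ∀ S : List (List α), S.flatten.Nodup →
      S.flatten.countP (fun q => Q q ∧ q ∉ S.filterMap f) =
        (S.map fun s => s.countP fun q => Q q ∧ q ∉ f s).sum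
  | [], _ => rfl
  | s :: S, hnd => by
    rw [flatten_cons, nodup_append] at hnd
    obtain ⟨-, hndS, hdisj⟩ := hnd
    have hmem : ∀ q, q ∈ (s :: S).filterMap f ↔ q ∈ f s ∨ q ∈ S.filterMap f := by
      intro q; simp [mem_filterMap, eq_comm]
    rw [flatten_cons, countP_append, map_cons, sum_cons,
      ← countP_flatten_not_mem_filterMap Q f hf S hndS]
    congr 1
    · refine countP_congr fun q hq => ?_
      have : q ∉ S.filterMap f := fun h => by
        obtain ⟨t, ht, hqt⟩ := mem_filterMap.mp h
        exact hdisj q hq q (mem_flatten.mpr ⟨t, ht, hf t q hqt⟩) rfl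
      simp only [decide_eq_true_eq, hmem]
      tauto
    · refine countP_congr fun q hq => ?_
      have : q ∉ f s := fun h => hdisj q (hf s q h) q hq rfl
      simp only [decide_eq_true_eq, hmem]
      tauto

theorem sum_map_eq_sum_map_ite_add_countP {ι : Type*} (f : ι → ℕ) (C : ι → Prop)
    [DecidablePred C] : ∀ L : List ι, (∀ i ∈ L, C i → 0 < f i) →
      (L.map f).sum = (L.map fun i => if C i then f i - 1 else f i).sum + L.countP C
  | [], _ => rfl
  | i :: L, h => by
    have ih := sum_map_eq_sum_map_ite_add_countP f C L fun j hj => h j (mem_cons_of_mem i hj)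
    simp only [map_cons, sum_cons, countP_cons, decide_eq_true_eq]
    split_ifs with hC
    · have := h i mem_cons_self hC
      omega
    · omega

theorem map_getD_range (l : List ℕ) : (List.range l.length).map (l.getD · 0) = l :=
  ext_getElem (by simp) fun i _ h => by simp [getElem?_eq_getElem h]

def fullSegEnd {α : Type*} (p : ℕ) (s : List α) : Option α :=
  if s.length = p then s.getLast? else none

theorem mem_of_mem_fullSegEnd {α : Type*} {p : ℕ} {s : List α} {a : α}
    (h : a ∈ fullSegEnd p s) : a ∈ s := by
  unfold fullSegEnd at h
  split_ifs at h
  · exact mem_of_getLast? h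
  · simp at h

theorem segsAux_nil (p n : ℕ) : segsAux p n [] = [] := by cases n <;> rfl

theorem segsAux_succ {p n : ℕ} {L rest : List (ℕ × ℕ)} {z : ℕ × ℕ} (hL : L ≠ [])
    (hz : (L.take p).getLast? = some z) (hrest : (L.drop p).filter (fun q => z.2 < q.2) = rest) :
    segsAux p (n + 1) L = L.take p :: segsAux p n rest := by
  subst hrest
  cases L with
  | nil => contradiction
  | cons a L => simp only [segsAux, hz, Option.map_some, Option.getD_some]

theorem flatten_segsAux_sublist (p : ℕ) : ∀ n L, (segsAux p n L).flatten <+ L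
  | 0, L => by simp [segsAux]
  | n + 1, [] => by simp [segsAux]
  | n + 1, a :: L => by
    simp only [segsAux, flatten_cons]
    conv_rhs => rw [← take_append_drop p (a :: L)]
    exact ((flatten_segsAux_sublist p n _).trans filter_sublist).append_left _

theorem filter_snd_gt_suffix {D : List (ℕ × ℕ)} (hD : D.Pairwise fun a b => a.2 ≤ b.2)
    (c : ℕ) : D.filter (fun q => c < q.2) <:+ D := by
  induction D with
  | nil => exact suffix_refl _
  | cons d D ih =>
    rw [pairwise_cons] at hD
    by_cases hd : c < d.2
    · rw [filter_cons_of_pos (by simpa using hd),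
        filter_eq_self.mpr fun e he => by simpa using hd.trans_le (hD.1 e he)]
    · rw [filter_cons_of_neg (by simpa using hd)]
      exact (ih hD.2).trans (suffix_cons d D)

theorem snd_eq_of_mem_head?_filter_snd_gt {c : ℕ} :
    ∀ {w : ℕ × ℕ} {D : List (ℕ × ℕ)}, IsChain (fun a b => b.2 ≤ a.2 + 1) (w :: D) → w.2 ≤ c →
      ∀ x ∈ (D.filter fun q => c < q.2).head?, x.2 = c + 1
  | _, [], _, _ => by simp
  | w, d :: D, hch, hw => by
    rw [isChain_cons_cons] at hch
    by_cases hd : c < d.2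
    · rw [filter_cons_of_pos (by simpa using hd)]
      have := hch.1
      simp only [head?_cons, Option.mem_def, Option.some.injEq, forall_eq']
      omega
    · rw [filter_cons_of_neg (by simpa using hd)]
      exact snd_eq_of_mem_head?_filter_snd_gt hch.2 (by omega)

section RimPath

variable (P : ℕ × ℕ → Prop) [DecidablePred P]

/-- One step along a rim read from left to right, where `P` marks the nodes ending their row:
from a row end the rim moves up (same column), from any other node it moves right. -/
def RimStep (a b : ℕ × ℕ) : Prop := b.2 = if P a then a.2 else a.2 + 1

/-- With `P` the row ends, the number of nodes of the segment `s` deleted by `J`. -/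
def numDeleted (p : ℕ) (s : List (ℕ × ℕ)) : ℕ :=
  s.countP fun q => P q ∧ q ∉ fullSegEnd p s

variable {P}

theorem RimStep.snd_le {a b : ℕ × ℕ} (h : RimStep P a b) : a.2 ≤ b.2 := by
  unfold RimStep at h; split_ifs at h <;> omega

theorem RimStep.snd_le_succ {a b : ℕ × ℕ} (h : RimStep P a b) : b.2 ≤ a.2 + 1 := by
  unfold RimStep at h; split_ifs at h <;> omega

theorem pairwise_snd_le_of_isChain_rimStep {L : List (ℕ × ℕ)} (h : IsChain (RimStep P) L) :
    L.Pairwise (fun a b => a.2 ≤ b.2) :=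
  pairwise_map.mp ((isChain_map Prod.snd).mpr (h.imp fun _ _ => RimStep.snd_le)).pairwise

theorem countP_not_add_snd_of_rimStep :
    ∀ {x z : ℕ × ℕ} {t : List (ℕ × ℕ)}, IsChain (RimStep P) (x :: t) →
      (x :: t).getLast? = some z →
      (x :: t).countP (fun q => ¬P q) + x.2 = if P z then z.2 else z.2 + 1
  | x, z, [], _, hz => by
    obtain rfl : x = z := by simpa using hz
    by_cases hx : P x <;> simp [hx, add_comm]
  | x, z, y :: t, hch, hz => by
    rw [isChain_cons_cons] at hch
    have ih := countP_not_add_snd_of_rimStep hch.2 (by simpa using hz)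
    have hxy : y.2 = if P x then x.2 else x.2 + 1 := hch.1
    rw [countP_cons]
    by_cases hx : P x <;> simp only [hx, if_true, if_false] at hxy ⊢ <;> simp at ih ⊢ <;> omega

theorem numDeleted_add_ite {p : ℕ} {s : List (ℕ × ℕ)} {z : ℕ × ℕ} (hnd : s.Nodup)
    (hz : s.getLast? = some z) :
    numDeleted P p s + (if P z ∧ s.length = p then 1 else 0) = s.countP fun q => P q := by
  have hfull : ∀ q, q ∈ fullSegEnd p s ↔ s.length = p ∧ q = z := by
    intro q; by_cases h : s.length = p <;> simp [fullSegEnd, h, hz, eq_comm (a := q)]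
  by_cases hp : s.length = p
  · have : numDeleted P p s = s.countP fun q => P q ∧ q ≠ z :=
      countP_congr fun q _ => by simp [hfull, hp]
    rw [this, ← countP_and_ne_getLast_add P hnd hz]
    simp [hp]
  · have : numDeleted P p s = s.countP fun q => P q :=
      countP_congr fun q _ => by simp [hfull, hp]
    simp [this, hp]

theorem numDeleted_add_snd {p : ℕ} {s : List (ℕ × ℕ)} {x z : ℕ × ℕ} (hnd : s.Nodup)
    (hch : IsChain (RimStep P) s) (hx : s.head? = some x) (hz : s.getLast? = some z) :
    numDeleted P p s + z.2 + 1 = s.length + x.2 + if P z ∧ s.length ≠ p then 1 else 0 := by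
  have hdel := numDeleted_add_ite (P := P) (p := p) hnd hz
  have hlen := length_eq_countP_add_countP (fun q => decide (P q)) (l := s)
  obtain ⟨t, rfl⟩ : ∃ t, s = x :: t := by
    cases s with
    | nil => simp at hx
    | cons a t => exact ⟨t, by simpa using hx⟩
  have hcol := countP_not_add_snd_of_rimStep hch hz
  simp only [decide_not] at hlen hcol
  split_ifs at hdel hcol ⊢ <;> simp_all <;> omega

theorem rowEnd_of_filter_snd_gt_eq_nil {z y : ℕ × ℕ} {D : List (ℕ × ℕ)}
    (hch : IsChain (RimStep P) (z :: D)) (hD : D.filter (fun q => z.2 < q.2) = [])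
    (hy : (z :: D).getLast? = some y) (hPy : P y) : P z ∧ y.2 = z.2 := by
  cases D with
  | nil =>
    obtain rfl : z = y := by simpa using hy
    exact ⟨hPy, rfl⟩
  | cons d D =>
    have hle : ∀ e ∈ d :: D, e.2 ≤ z.2 := fun e he => by
      simpa using filter_eq_nil_iff.mp hD e he
    have hge := (pairwise_cons.mp (pairwise_snd_le_of_isChain_rimStep hch)).1
    have hzd : RimStep P z d := (isChain_cons_cons.mp hch).1
    have hdz : d.2 = z.2 := le_antisymm (hle d mem_cons_self) (hge d mem_cons_self)
    have hyD : y ∈ d :: D := mem_of_getLast? (by simpa using hy)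
    refine ⟨by_contra fun hPz => ?_, le_antisymm (hle y hyD) (hge y hyD)⟩
    unfold RimStep at hzd
    rw [if_neg hPz] at hzd
    omega

theorem snd_eq_and_suffix_of_filter_snd_gt_eq_cons {z x' : ℕ × ℕ} {D t' : List (ℕ × ℕ)}
    (hch : IsChain (RimStep P) (z :: D)) (hD : D.filter (fun q => z.2 < q.2) = x' :: t') :
    x'.2 = z.2 + 1 ∧ x' :: t' <:+ z :: D :=
  ⟨snd_eq_of_mem_head?_filter_snd_gt (hch.imp fun _ _ => RimStep.snd_le_succ) le_rfl x'
      (by rw [hD]; rfl),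
    hD ▸ (filter_snd_gt_suffix (pairwise_cons.mp (pairwise_snd_le_of_isChain_rimStep hch)).2
      _).trans (suffix_cons z D)⟩

theorem sum_numDeleted_segsAux {p : ℕ} (hp : 0 < p) :
    ∀ (n : ℕ) (L : List (ℕ × ℕ)) {x y : ℕ × ℕ}, L.length ≤ n → L.Nodup →
      IsChain (RimStep P) L → L.head? = some x → L.getLast? = some y → P y →
      ((segsAux p n L).map (numDeleted P p)).sum + y.2 + 1 =
        (segsAux p n L).flatten.length + x.2 +
          if p ∣ (segsAux p n L).flatten.length then 0 else 1
  | 0, L, x, y, hlen, _, _, hx, _, _ => by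
    rw [Nat.le_zero, length_eq_zero_iff] at hlen
    simp [hlen] at hx
  | n + 1, L, x, y, hlen, hnd, hch, hx, hy, hPy => by
    have hL : L ≠ [] := by rintro rfl; simp at hx
    have hsx : (L.take p).head? = some x := by rw [head?_take, if_neg hp.ne', hx]
    have hsne : L.take p ≠ [] := by rintro h; simp [h] at hsx
    obtain ⟨z, hz⟩ := Option.isSome_iff_exists.mp (getLast?_isSome.mpr hsne)
    have hseg := numDeleted_add_snd (p := p) (hnd.sublist (take_sublist p L)) (hch.take p) hsx hz
    have hzD : IsChain (RimStep P) (z :: L.drop p) :=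
      isChain_cons_of_isChain_append (by rwa [take_append_drop]) hz
    have hzy : (z :: L.drop p).getLast? = some y := by
      rw [getLast?_cons_eq_getLast?_append hz, take_append_drop, hy]
    rcases hr : (L.drop p).filter fun q => z.2 < q.2 with _ | ⟨x', t'⟩ <;>
      rw [segsAux_succ hL hz hr, map_cons, sum_cons, flatten_cons, length_append]
    · obtain ⟨hPz, hyz⟩ := rowEnd_of_filter_snd_gt_eq_nil hzD hr hzy hPy
      have hdvd : p ∣ (L.take p).length ↔ (L.take p).length = p :=
        ⟨fun h => le_antisymm (length_take_le p L) (Nat.le_of_dvd (length_pos_iff.mpr hsne) h),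
          fun h => by rw [h]⟩
      simp only [segsAux_nil, hPz, true_and, map_nil, sum_nil, flatten_nil, length_nil, add_zero,
        hdvd] at hseg ⊢
      split_ifs at hseg ⊢ <;> omega
    · obtain ⟨hx', hsuf⟩ := snd_eq_and_suffix_of_filter_snd_gt_eq_cons hzD hr
      have hsp : (L.take p).length = p := by
        have : L.drop p ≠ [] := fun h => by simp [h] at hr
        have : p < L.length := by simpa using this
        rw [length_take]
        omega
      have ih := sum_numDeleted_segsAux hp n (x' :: t') (x := x') (y := y)
        (by
          have := length_filter_le (fun q => decide (z.2 < q.2)) (L.drop p)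
          rw [hr, length_drop] at this
          omega)
        (hr ▸ (filter_sublist.trans (drop_sublist p L)).nodup hnd)
        (hzD.suffix hsuf) rfl (by rw [← hzy]; exact IsSuffix.getLast?_eq hsuf (cons_ne_nil _ _))
        hPy
      have hdvd : p ∣ p + (segsAux p n (x' :: t')).flatten.length ↔
          p ∣ (segsAux p n (x' :: t')).flatten.length := Nat.dvd_add_right dvd_rfl
      simp only [hsp, hdvd, ne_eq, not_true_eq_false, and_false, if_false, add_zero] at hseg ⊢
      split_ifs at ih ⊢ <;> omega

end RimPath

section Rim

variable {l : List ℕ}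

def IsRowEnd (l : List ℕ) (q : ℕ × ℕ) : Prop := l.getD q.1 0 = q.2

instance (l : List ℕ) : DecidablePred (IsRowEnd l) := fun q =>
  inferInstanceAs (Decidable (l.getD q.1 0 = q.2))

def rimRow (l : List ℕ) (i : ℕ) : List (ℕ × ℕ) :=
  (List.range' (max (l.getD (i+1) 0) 1) (l.getD i 0 + 1 - max (l.getD (i+1) 0) 1)).map
    (fun j => (i, j))

def rimUpTo (l : List ℕ) (k : ℕ) : List (ℕ × ℕ) := ((List.range k).reverse).flatMap (rimRow l)

theorem rimList_eq_rimUpTo (l : List ℕ) : rimList l = rimUpTo l l.length := rfl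

theorem rimUpTo_succ (l : List ℕ) (k : ℕ) : rimUpTo l (k + 1) = rimRow l k ++ rimUpTo l k := by
  simp [rimUpTo, range_succ]

theorem IsPartition.getD_antitone (hl : IsPartition l) {i j : ℕ} (h : i ≤ j) :
    l.getD j 0 ≤ l.getD i 0 := by
  rcases lt_or_ge j l.length with hj | hj
  · rw [getD_eq_getElem l 0 hj, getD_eq_getElem l 0 (by omega)]
    rcases h.eq_or_lt with rfl | h
    · exact le_rfl
    · exact pairwise_iff_getElem.mp hl i j (by omega) hj h
  · rw [getD_eq_default l 0 hj]
    exact Nat.zero_le _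

theorem mem_rimRow {i : ℕ} {q : ℕ × ℕ} :
    q ∈ rimRow l i ↔ q.1 = i ∧ max (l.getD (i+1) 0) 1 ≤ q.2 ∧ q.2 ≤ l.getD i 0 := by
  obtain ⟨a, b⟩ := q
  simp only [rimRow, mem_map, mem_range'_1, Prod.mk.injEq]
  constructor
  · rintro ⟨j, hj, rfl, rfl⟩; omega
  · rintro ⟨rfl, hb⟩; exact ⟨b, by omega, rfl, rfl⟩

theorem rimRow_eq_nil {i : ℕ} (h : l.getD i 0 = 0) : rimRow l i = [] :=
  eq_nil_iff_forall_not_mem.mpr fun q hq => by have := mem_rimRow.mp hq; omega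

theorem nodup_rimRow (l : List ℕ) (i : ℕ) : (rimRow l i).Nodup :=
  (nodup_range' ..).map (Prod.mk_right_injective i)

theorem isChain_rimRow (l : List ℕ) (i : ℕ) : IsChain (RimStep (IsRowEnd l)) (rimRow l i) := by
  rw [rimRow, isChain_map, isChain_iff_getElem]
  intro k hk
  simp only [length_range'] at hk
  simp only [getElem_range', RimStep, IsRowEnd]
  rw [if_neg (by omega)]
  omega

theorem head?_rimRow (hl : IsPartition l) {i : ℕ} (h : 0 < l.getD i 0) :
    (rimRow l i).head? = some (i, max (l.getD (i+1) 0) 1) := by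
  have : l.getD (i+1) 0 ≤ l.getD i 0 := hl.getD_antitone (by omega)
  simp only [rimRow, head?_map, head?_range']
  rw [if_neg (by omega)]
  rfl

theorem getLast?_rimRow (hl : IsPartition l) {i : ℕ} (h : 0 < l.getD i 0) :
    (rimRow l i).getLast? = some (i, l.getD i 0) := by
  have : l.getD (i+1) 0 ≤ l.getD i 0 := hl.getD_antitone (by omega)
  simp only [rimRow, getLast?_map, getLast?_range']
  rw [if_neg (by omega)]
  simp only [Option.map_some, Option.some.injEq, Prod.mk.injEq, true_and]
  omega

theorem snd_of_mem_head?_rimUpTo (hl : IsPartition l) :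
    ∀ k, ∀ q ∈ (rimUpTo l k).head?, q.2 = max (l.getD k 0) 1
  | 0, _, hq => by simp [rimUpTo] at hq
  | k + 1, q, hq => by
    rw [rimUpTo_succ, head?_append] at hq
    have : l.getD (k+1) 0 ≤ l.getD k 0 := hl.getD_antitone (by omega)
    rcases Nat.eq_zero_or_pos (l.getD k 0) with h | h
    · rw [rimRow_eq_nil h, head?_nil, Option.none_or] at hq
      rw [snd_of_mem_head?_rimUpTo hl k q hq]
      omega
    · rw [head?_rimRow hl h, Option.some_or, Option.mem_some_iff] at hq
      rw [← hq]

theorem isChain_rimUpTo (hl : IsPartition l) :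
    ∀ k, IsChain (RimStep (IsRowEnd l)) (rimUpTo l k)
  | 0 => by simp [rimUpTo]
  | k + 1 => by
    rw [rimUpTo_succ, isChain_append]
    refine ⟨isChain_rimRow l k, isChain_rimUpTo hl k, fun u hu v hv => ?_⟩
    have h : 0 < l.getD k 0 := Nat.pos_of_ne_zero fun h => by simp [rimRow_eq_nil h] at hu
    rw [getLast?_rimRow hl h, Option.mem_some_iff] at hu
    subst hu
    simp only [RimStep, IsRowEnd, if_true, snd_of_mem_head?_rimUpTo hl k v hv]
    omega

theorem nodup_rimUpTo (l : List ℕ) (k : ℕ) : (rimUpTo l k).Nodup := by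
  refine nodup_flatMap.mpr ⟨fun i _ => nodup_rimRow l i, (nodup_reverse.mpr nodup_range).imp ?_⟩
  intro i j hij q hi hj
  exact hij ((mem_rimRow.mp hi).1.symm.trans (mem_rimRow.mp hj).1)

theorem getLast?_rimUpTo (hl : IsPartition l) (h0 : 0 < l.getD 0 0) :
    ∀ k, (rimUpTo l (k + 1)).getLast? = some (0, l.getD 0 0)
  | 0 => by simp [rimUpTo, getLast?_rimRow hl h0]
  | k + 1 => by rw [rimUpTo_succ, getLast?_append, getLast?_rimUpTo hl h0 k, Option.some_or]

theorem mem_rimList {q : ℕ × ℕ} (hq : q ∈ rimList l) :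
    q.1 < l.length ∧ 0 < q.2 ∧ q.2 ≤ l.getD q.1 0 := by
  obtain ⟨i, hi, hq⟩ := mem_flatMap.mp hq
  obtain ⟨rfl, h⟩ := mem_rimRow.mp hq
  exact ⟨by simpa using hi, by omega, h.2⟩

theorem rimList_eq_nil (hl : IsPartition l) (h0 : l.getD 0 0 = 0) : rimList l = [] :=
  eq_nil_iff_forall_not_mem.mpr fun q hq => by
    have := mem_rimList hq
    have := hl.getD_antitone (Nat.zero_le q.1)
    omega

theorem getLast?_rimList (hl : IsPartition l) (h0 : 0 < l.getD 0 0) :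
    (rimList l).getLast? = some (0, l.getD 0 0) := by
  obtain ⟨k, hk⟩ : ∃ k, l.length = k + 1 :=
    Nat.exists_eq_succ_of_ne_zero fun h => by simp [length_eq_zero_iff.mp h] at h0
  rw [rimList_eq_rimUpTo, hk, getLast?_rimUpTo hl h0]

theorem exists_head?_rimList (hl : IsPartition l) (h0 : 0 < l.getD 0 0) :
    ∃ x, (rimList l).head? = some x ∧ x.2 = 1 := by
  obtain ⟨x, hx⟩ := Option.isSome_iff_exists.mp (isSome_head?.mpr
    (ne_nil_of_mem (mem_of_getLast? (getLast?_rimList hl h0))))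
  refine ⟨x, hx, ?_⟩
  rw [rimList_eq_rimUpTo] at hx
  rw [snd_of_mem_head?_rimUpTo hl _ x hx, getD_eq_default l 0 le_rfl]
  rfl

end Rim

theorem pRim_sublist_rimList (p : ℕ) (l : List ℕ) : pRim p l <+ rimList l :=
  flatten_segsAux_sublist p _ _

theorem nodup_pRim (p : ℕ) (l : List ℕ) : (pRim p l).Nodup :=
  (pRim_sublist_rimList p l).nodup (nodup_rimUpTo l _)

theorem jNum_eq_countP_pRim (p : ℕ) (l : List ℕ) :
    jNum p l = (pRim p l).countP fun q => IsRowEnd l q ∧ q ∉ segEnds p l := by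
  set C : ℕ → Prop := fun i => (i, l.getD i 0) ∈ pRim p l ∧ (i, l.getD i 0) ∉ segEnds p l
  have hsum : l.sum = (Jmap p l).sum + (range l.length).countP C := by
    conv_lhs => rw [← map_getD_range l]
    exact sum_map_eq_sum_map_ite_add_countP _ C _ fun i _ hi =>
      (mem_rimList ((pRim_sublist_rimList p l).subset hi.1)).2.1
  have hperm : ((range l.length).filter C).map (fun i => (i, l.getD i 0)) ~
      (pRim p l).filter fun q => IsRowEnd l q ∧ q ∉ segEnds p l := by
    refine (perm_ext_iff_of_nodup ((nodup_range.filter _).map fun i j h => (Prod.mk.inj h).1)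
      ((nodup_pRim p l).filter _)).mpr fun q => ?_
    simp only [mem_map, mem_filter, mem_range, decide_eq_true_eq, C]
    constructor
    · rintro ⟨i, ⟨-, hi⟩, rfl⟩
      exact ⟨hi.1, rfl, hi.2⟩
    · rintro ⟨hq, hend : l.getD q.1 0 = q.2, hE⟩
      have hq' : (q.1, l.getD q.1 0) = q := by rw [hend]
      refine ⟨q.1, ⟨(mem_rimList ((pRim_sublist_rimList p l).subset hq)).1, ?_⟩, hq'⟩
      rw [hq']
      exact ⟨hq, hE⟩
  rw [jNum, hsum, countP_eq_length_filter, countP_eq_length_filter, ← hperm.length_eq, length_map]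
  omega

theorem jNum_eq_sum_numDeleted (p : ℕ) (l : List ℕ) :
    jNum p l = ((segs p l).map (numDeleted (IsRowEnd l) p)).sum := by
  rw [jNum_eq_countP_pRim]
  refine (countP_congr fun q _ => ?_).trans <| countP_flatten_not_mem_filterMap (IsRowEnd l)
    (fullSegEnd p) (fun _ _ => mem_of_mem_fullSegEnd) (segs p l) (nodup_pRim p l)
  simp only [decide_eq_true_eq]
  rfl

theorem sum_numDeleted_segs {p : ℕ} {l : List ℕ} (hp : 0 < p) (hl : IsPartition l)
    (h0 : 0 < l.getD 0 0) :
    ((segs p l).map (numDeleted (IsRowEnd l) p)).sum + l.getD 0 0 + 1 =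
      aNum p l + 1 + if p ∣ aNum p l then 0 else 1 := by
  obtain ⟨x, hx, hx1⟩ := exists_head?_rimList hl h0
  have := sum_numDeleted_segsAux hp _ (rimList l) le_rfl (nodup_rimUpTo l _)
    (isChain_rimUpTo hl _) hx (getLast?_rimList hl h0) rfl
  rwa [hx1] at this

end Mullineux

open Mullineux in
/-- `j(λ) = a(λ) - λ₁` if `p ∣ a(λ)`, and `j(λ) = a(λ) + 1 - λ₁` otherwise. -/
theorem jNum_eq (p : ℕ) (hp : p.Prime) (l : List ℕ) (hl : IsPartition l) :
    (jNum p l : ℤ) =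
      if (p : ℤ) ∣ (aNum p l : ℤ) then (aNum p l : ℤ) - (l.getD 0 0 : ℤ)
      else (aNum p l : ℤ) + 1 - (l.getD 0 0 : ℤ) := by
  rw [jNum_eq_sum_numDeleted]
  simp only [Int.natCast_dvd_natCast]
  rcases Nat.eq_zero_or_pos (l.getD 0 0) with h0 | h0
  · have hsegs : segs p l = [] := by rw [segs, rimList_eq_nil hl h0, segsAux_nil]
    have ha : aNum p l = 0 := by simp [aNum, pRim, hsegs]
    rw [ha, hsegs, h0]
    simp
  · have := sum_numDeleted_segs hp.pos hl h0
    split_ifs at this ⊢ <;> omega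
end

section
/- Let p be a prime and λ a partition with λ_{m+1} = 0. Define x_i ∈ {0,1} for i = m, m−1, ..., 1 recursively by: x_i = 1 if λ_i + x_{i+1} + ... + x_m is not divisible by p, and x_i = 0 otherwise (with x_{m+1} = ... = 0). Then J(λ) is the partition μ with μ_i = λ_i − x_i for all i. -/
namespace Mullineux

/-- The state `(n, c)` records that `n` rim nodes have been kept so far, the last of them in
column `c`. -/
def rimStep (p : ℕ) (s q : ℕ × ℕ) : ℕ × ℕ :=
  if p ∣ s.1 ∧ q.2 ≤ s.2 then s else (s.1 + 1, q.2)

/-- The kept rim nodes, each paired with its ordinal among the kept nodes. -/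
def rimScan (p : ℕ) : ℕ × ℕ → List (ℕ × ℕ) → List ((ℕ × ℕ) × ℕ)
  | _, [] => []
  | s, q :: L =>
      (if p ∣ s.1 ∧ q.2 ≤ s.2 then [] else [(q, s.1 + 1)]) ++ rimScan p (rimStep p s q) L

def lastCol (s : List (ℕ × ℕ)) : ℕ := ((s.getLast?).map Prod.snd).getD 0

theorem segsAux_succ_cons (p fuel : ℕ) (q : ℕ × ℕ) (L : List (ℕ × ℕ)) :
    segsAux p (fuel + 1) (q :: L) = (q :: L).take p ::
      segsAux p fuel (((q :: L).drop p).filter (fun r => lastCol ((q :: L).take p) < r.2)) :=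
  rfl

section Scan

variable {p : ℕ}

theorem rimScan_append (s : ℕ × ℕ) (A B : List (ℕ × ℕ)) :
    rimScan p s (A ++ B) = rimScan p s A ++ rimScan p (A.foldl (rimStep p) s) B := by
  induction A generalizing s with
  | nil => rfl
  | cons q A ih => simp [rimScan, ih]

theorem foldl_rimStep_map_prodMap (g : ℕ → ℕ) (s : ℕ × ℕ) (A : List (ℕ × ℕ)) :
    (A.map (Prod.map g id)).foldl (rimStep p) s = A.foldl (rimStep p) s :=
  List.foldl_map

theorem rimScan_map_prodMap (g : ℕ → ℕ) (s : ℕ × ℕ) (A : List (ℕ × ℕ)) :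
    rimScan p s (A.map (Prod.map g id)) = (rimScan p s A).map (Prod.map (Prod.map g id) id) := by
  induction A generalizing s with
  | nil => rfl
  | cons q A ih =>
    simp only [List.map_cons, rimScan, List.map_append, ← ih, Prod.map_snd, id_eq]
    split_ifs <;> rfl

theorem fst_mem_of_mem_rimScan {s : ℕ × ℕ} {A : List (ℕ × ℕ)} {e : (ℕ × ℕ) × ℕ}
    (h : e ∈ rimScan p s A) : e.1 ∈ A := by
  induction A generalizing s with
  | nil => simp [rimScan] at h
  | cons q A ih =>
    simp only [rimScan, List.mem_append] at h
    rcases h with h | h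
    · split_ifs at h <;> simp_all
    · exact List.mem_cons_of_mem _ (ih h)

theorem mem_rimScan_append_singleton {s q : ℕ × ℕ} {k : ℕ} {R : List (ℕ × ℕ)} (hq : q ∉ R) :
    (q, k) ∈ rimScan p s (R ++ [q]) ↔
      ¬ (p ∣ (R.foldl (rimStep p) s).1 ∧ q.2 ≤ (R.foldl (rimStep p) s).2) ∧
        k = (R.foldl (rimStep p) s).1 + 1 := by
  have hR : (q, k) ∉ rimScan p s R := fun h => hq (fst_mem_of_mem_rimScan h)
  simp only [rimScan_append, List.mem_append, hR, false_or, rimScan, List.append_nil]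
  split_ifs <;> simp_all

theorem rimScan_eq_zipIdx_of_not_dvd {L : List (ℕ × ℕ)} {n c : ℕ} (hc : p ∣ n → ∀ q ∈ L, c < q.2)
    (hn : ∀ i, 0 < i → i < L.length → ¬ p ∣ n + i) :
    rimScan p (n, c) L = L.zipIdx (n + 1) ∧
      L.foldl (rimStep p) (n, c) = (n + L.length, (L.getLast?.map Prod.snd).getD c) := by
  induction L generalizing n c with
  | nil => simp [rimScan]
  | cons q L ih =>
    have hnoskip : ¬ (p ∣ n ∧ q.2 ≤ c) := fun h => (hc h.1 q List.mem_cons_self).not_ge h.2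
    have hstep : rimStep p (n, c) q = (n + 1, q.2) := if_neg hnoskip
    have hL : L ≠ [] → ¬ p ∣ n + 1 := fun hL => hn 1 one_pos (by simpa [List.length_pos_iff])
    obtain ⟨hscan, hfold⟩ := ih (n := n + 1) (c := q.2)
      (fun h => by cases L <;> simp_all)
      (fun i hi hiL => by rw [add_assoc, add_comm 1]; exact hn (i + 1) (by omega) (by simp; omega))
    refine ⟨?_, ?_⟩
    · simp [rimScan, hnoskip, hstep, hscan, List.zipIdx_cons]
    · rw [List.foldl_cons, hstep, hfold]
      cases L <;> simp [add_assoc, add_comm 1, List.getLast?_eq_some_getLast]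

theorem rimScan_filter_lt {n c : ℕ} (hn : p ∣ n) {L : List (ℕ × ℕ)}
    (hL : L.Pairwise (fun q r => q.2 ≤ r.2)) :
    rimScan p (n, c) (L.filter (fun q => c < q.2)) = rimScan p (n, c) L := by
  induction L with
  | nil => rfl
  | cons q L ih =>
    obtain ⟨hq, hL⟩ := List.pairwise_cons.1 hL
    by_cases hqc : q.2 ≤ c
    · have hskip : rimStep p (n, c) q = (n, c) := if_pos ⟨hn, hqc⟩
      simp [hqc, ih hL, rimScan, hskip, hn]
    · have hkeep : L.filter (fun q => c < q.2) = L :=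
        List.filter_eq_self.2 fun r hr => by simpa using (lt_of_not_ge hqc).trans_le (hq r hr)
      rw [List.filter_cons_of_pos (by simpa using hqc), hkeep]

theorem filterMap_zipIdx_of_dvd {α : Type*} {n : ℕ} (hn : p ∣ n) {X : List α}
    (hX : X.length ≤ p) :
    (X.zipIdx (n + 1)).filterMap (fun e => if p ∣ e.2 then some e.1 else none) =
      (if X.length = p then X.getLast? else none).toList := by
  induction X using List.reverseRecOn with
  | nil => simp
  | append_singleton Y x ih =>
    simp only [List.length_append, List.length_singleton] at hX
    have hdvd : p ∣ n + 1 + Y.length ↔ Y.length + 1 = p := by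
      rw [add_assoc, Nat.dvd_add_right hn, add_comm 1]
      exact ⟨fun h => le_antisymm hX (Nat.le_of_dvd (by omega) h), fun h => h ▸ dvd_rfl⟩
    rw [List.zipIdx_append, List.filterMap_append, ih (by omega), if_neg (by omega)]
    by_cases h : Y.length + 1 = p <;> simp [hdvd, h]

theorem rimScan_eq_take_append (hp : 0 < p) {n c : ℕ} (hn : p ∣ n) {L : List (ℕ × ℕ)}
    (hL0 : L ≠ []) (hL : L.Pairwise (fun q r => q.2 ≤ r.2)) (hc : ∀ q ∈ L, c < q.2) :
    rimScan p (n, c) L = (L.take p).zipIdx (n + 1) ++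
      rimScan p (n + p, lastCol (L.take p))
        ((L.drop p).filter (fun q => lastCol (L.take p) < q.2)) := by
  obtain ⟨hscan, hfold⟩ := rimScan_eq_zipIdx_of_not_dvd (p := p) (L := L.take p) (n := n) (c := c)
    (fun _ q hq => hc q (List.mem_of_mem_take hq))
    (fun i hi hiL => by
      rw [Nat.dvd_add_right hn]
      exact Nat.not_dvd_of_pos_of_lt hi (hiL.trans_le (List.length_take_le _ _)))
  obtain ⟨x, hx⟩ : ∃ x, (L.take p).getLast? = some x :=
    Option.isSome_iff_exists.1 (List.getLast?_isSome.2 (by simp [hL0, hp.ne']))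
  have hcol : (((L.take p).getLast?).map Prod.snd).getD c = lastCol (L.take p) := by
    simp [lastCol, hx]
  conv_lhs => rw [← List.take_append_drop p L]
  rw [rimScan_append, hscan, hfold, hcol]
  congr 1
  by_cases hpL : p ≤ L.length
  · rw [List.length_take_of_le hpL, rimScan_filter_lt (Nat.dvd_add_self_right.2 hn)
      (hL.sublist (List.drop_sublist _ _))]
  · simp [List.drop_eq_nil_of_le (le_of_not_ge hpL), rimScan]

theorem segsAux_eq_rimScan (hp : 0 < p) {fuel n c : ℕ} {L : List (ℕ × ℕ)}
    (hlen : L.length ≤ fuel) (hL : L.Pairwise (fun q r => q.2 ≤ r.2)) (hn : p ∣ n)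
    (hc : ∀ q ∈ L, c < q.2) :
    (segsAux p fuel L).flatten = (rimScan p (n, c) L).map Prod.fst ∧
    (segsAux p fuel L).filterMap (fun s => if s.length = p then s.getLast? else none) =
      (rimScan p (n, c) L).filterMap (fun e => if p ∣ e.2 then some e.1 else none) := by
  induction fuel generalizing L n c with
  | zero => simp [List.eq_nil_of_length_eq_zero (Nat.le_zero.1 hlen), segsAux, rimScan]
  | succ fuel ih =>
    rcases L with _ | ⟨q, L⟩
    · simp [segsAux, rimScan]
    obtain ⟨ihflat, ihends⟩ :=
      ih (L := ((q :: L).drop p).filter (fun r => lastCol ((q :: L).take p) < r.2)) (n := n + p)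
      ((List.length_filter_le _ _).trans (by rw [List.length_drop]; omega))
      ((hL.sublist (List.drop_sublist _ _)).sublist List.filter_sublist)
      (Nat.dvd_add_self_right.2 hn)
      (fun r hr => by simpa using List.of_mem_filter hr)
    rw [segsAux_succ_cons, rimScan_eq_take_append hp hn (List.cons_ne_nil _ _) hL hc]
    constructor
    · rw [List.flatten_cons, ihflat, List.map_append, List.zipIdx_map_fst]
    · rw [List.filterMap_append, filterMap_zipIdx_of_dvd hn (List.length_take_le _ _), ← ihends,
        List.filterMap_cons]
      generalize (if _ = p then _ else none) = o
      cases o <;> rfl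

end Scan

def rowNodes (i s e : ℕ) : List (ℕ × ℕ) := (List.range' s (e + 1 - s)).map (Prod.mk i)

section Rows

variable {i s e : ℕ}

theorem mem_rowNodes {q : ℕ × ℕ} : q ∈ rowNodes i s e ↔ q.1 = i ∧ s ≤ q.2 ∧ q.2 ≤ e := by
  obtain ⟨i', j⟩ := q
  simp only [rowNodes, List.mem_map, List.mem_range'_1, Prod.mk.injEq]
  constructor
  · rintro ⟨j, hj, rfl, rfl⟩; omega
  · rintro ⟨rfl, h⟩; exact ⟨j, by omega, rfl, rfl⟩

theorem rowNodes_succ (h : s ≤ e + 1) :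
    rowNodes i s (e + 1) = rowNodes i s e ++ [(i, e + 1)] := by
  rw [rowNodes, rowNodes, show e + 1 + 1 - s = (e + 1 - s) + 1 by omega, List.range'_concat]
  simp only [List.map_append, List.map_cons, List.map_nil]
  congr 3
  omega

theorem rowNodes_of_le (h : s ≤ e) : rowNodes i s e = (i, s) :: rowNodes i (s + 1) e := by
  rw [rowNodes, rowNodes, show e + 1 - s = (e + 1 - (s + 1)) + 1 by omega, List.range'_succ]
  rfl

theorem rowNodes_pairwise : (rowNodes i s e).Pairwise (fun q r => q.2 ≤ r.2) :=
  List.pairwise_map.2 ((List.pairwise_lt_range' 1).imp le_of_lt)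

theorem foldl_rimStep_rowNodes (p n : ℕ) {c : ℕ} (h : c ≤ e) :
    (rowNodes i (c + 1) e).foldl (rimStep p) (n, c) = (n + (e - c), e) := by
  induction e, h using Nat.le_induction with
  | base => simp [rowNodes]
  | succ e hce ih =>
    rw [rowNodes_succ (by omega), List.foldl_append, ih]
    simp only [List.foldl_cons, List.foldl_nil, rimStep, Nat.not_succ_le_self, and_false,
      if_false, Prod.mk.injEq, and_true]
    omega

end Rows

theorem rimList_cons (a : ℕ) (t : List ℕ) :
    rimList (a :: t) =
      (rimList t).map (Prod.map (· + 1) id) ++ rowNodes 0 (max (t.getD 0 0) 1) a := by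
  rw [rimList, rimList, List.length_cons, List.range_succ_eq_map, List.reverse_cons,
    List.flatMap_append, ← List.map_reverse, List.flatMap_map, List.map_flatMap]
  congr 1
  · apply List.flatMap_congr
    intro i _
    simp only [List.getD_cons_succ, List.map_map]
    rfl
  · simp [rowNodes]

section Partition

variable {a : ℕ} {t l : List ℕ}

theorem IsPartition.getD_zero_le (hl : IsPartition (a :: t)) : t.getD 0 0 ≤ a := by
  cases t with
  | nil => exact Nat.zero_le _
  | cons b t => exact (List.pairwise_cons.1 hl).1 b List.mem_cons_self

theorem IsPartition.of_cons (hl : IsPartition (a :: t)) : IsPartition t := List.Pairwise.of_cons hl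

theorem IsPartition.eq_zero_of_getD_eq_zero (hl : IsPartition l) (h0 : l.getD 0 0 = 0) :
    ∀ b ∈ l, b = 0 := by
  cases l with
  | nil => simp
  | cons a t =>
    intro b hb
    rcases List.mem_cons.1 hb with rfl | hb
    · exact h0
    · have := (List.pairwise_cons.1 hl).1 b hb
      simp at h0
      omega

theorem IsPartition.col_of_mem_rimList (hl : IsPartition l) {q : ℕ × ℕ} (hq : q ∈ rimList l) :
    0 < q.2 ∧ q.2 ≤ l.getD 0 0 := by
  induction l generalizing q with
  | nil => simp [rimList] at hq
  | cons a t ih =>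
    have hta := hl.getD_zero_le
    rw [rimList_cons, List.mem_append, List.mem_map] at hq
    rcases hq with ⟨r, hr, rfl⟩ | hq
    · have := ih hl.of_cons hr
      simp only [Prod.map_snd, id_eq, List.getD_cons_zero]
      omega
    · have := mem_rowNodes.1 hq
      simp only [List.getD_cons_zero]
      omega

theorem IsPartition.rimList_pairwise (hl : IsPartition l) :
    (rimList l).Pairwise (fun q r => q.2 ≤ r.2) := by
  induction l with
  | nil => simp [rimList]
  | cons a t ih =>
    rw [rimList_cons, List.pairwise_append, List.pairwise_map]
    refine ⟨ih hl.of_cons, rowNodes_pairwise, fun q hq r hr => ?_⟩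
    obtain ⟨q', hq', rfl⟩ := List.mem_map.1 hq
    have := (hl.of_cons.col_of_mem_rimList hq').2
    have := (mem_rowNodes.1 hr).2.1
    simp only [Prod.map_snd, id_eq]
    omega

end Partition

section Jmap

variable {p a : ℕ} {t l : List ℕ}

theorem mem_pRim_iff (hp : 0 < p) (hl : IsPartition l) {q : ℕ × ℕ} :
    q ∈ pRim p l ↔ ∃ k, (q, k) ∈ rimScan p (0, 0) (rimList l) := by
  rw [pRim, segs, (segsAux_eq_rimScan hp le_rfl hl.rimList_pairwise (dvd_zero p)
    fun _ hq => (hl.col_of_mem_rimList hq).1).1]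
  simp

theorem mem_segEnds_iff (hp : 0 < p) (hl : IsPartition l) {q : ℕ × ℕ} :
    q ∈ segEnds p l ↔ ∃ k, (q, k) ∈ rimScan p (0, 0) (rimList l) ∧ p ∣ k := by
  rw [segEnds, segs, (segsAux_eq_rimScan hp le_rfl hl.rimList_pairwise (dvd_zero p)
    fun _ hq => (hl.col_of_mem_rimList hq).1).2]
  simp only [List.mem_filterMap, Option.ite_none_right_eq_some, Option.some.injEq]
  constructor
  · rintro ⟨e, he, hk, rfl⟩
    exact ⟨e.2, he, hk⟩
  · rintro ⟨k, h, hk⟩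
    exact ⟨(q, k), h, hk, rfl⟩

theorem mem_rimScan_rimList_cons_succ {i j k : ℕ} :
    ((i + 1, j), k) ∈ rimScan p (0, 0) (rimList (a :: t)) ↔
      ((i, j), k) ∈ rimScan p (0, 0) (rimList t) := by
  rw [rimList_cons, rimScan_append, rimScan_map_prodMap, List.mem_append, List.mem_map]
  constructor
  · rintro (⟨⟨⟨i', j'⟩, k'⟩, h, he⟩ | h)
    · simp only [Prod.map, id_eq, Prod.mk.injEq, Nat.add_right_cancel_iff] at he
      obtain ⟨⟨rfl, rfl⟩, rfl⟩ := he
      exact h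
    · exact absurd (mem_rowNodes.1 (fst_mem_of_mem_rimScan h)).1 (Nat.succ_ne_zero i)
  · exact fun h => Or.inl ⟨_, h, rfl⟩

theorem mem_pRim_cons_succ (hp : 0 < p) (hl : IsPartition (a :: t)) {i j : ℕ} :
    (i + 1, j) ∈ pRim p (a :: t) ↔ (i, j) ∈ pRim p t := by
  simp only [mem_pRim_iff hp hl, mem_pRim_iff hp hl.of_cons, mem_rimScan_rimList_cons_succ]

theorem mem_segEnds_cons_succ (hp : 0 < p) (hl : IsPartition (a :: t)) {i j : ℕ} :
    (i + 1, j) ∈ segEnds p (a :: t) ↔ (i, j) ∈ segEnds p t := by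
  simp only [mem_segEnds_iff hp hl, mem_segEnds_iff hp hl.of_cons, mem_rimScan_rimList_cons_succ]

theorem xSeq_sum_cons :
    (xSeq p (a :: t)).sum = (if p ∣ a + (xSeq p t).sum then 0 else 1) + (xSeq p t).sum := by
  simp [xSeq]

theorem xSeq_sum_eq_zero (h : ∀ b ∈ l, b = 0) : (xSeq p l).sum = 0 := by
  induction l with
  | nil => rfl
  | cons a t ih =>
    rw [xSeq_sum_cons, ih fun b hb => h b (List.mem_cons_of_mem _ hb), h a List.mem_cons_self]
    simp

theorem foldl_rimStep_rimList (hl : IsPartition l) :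
    ((rimList l).foldl (rimStep p) (0, 0)).2 = l.getD 0 0 ∧
      ((rimList l).foldl (rimStep p) (0, 0)).1 ≡ l.getD 0 0 + (xSeq p l.tail).sum [MOD p] := by
  induction l with
  | nil => exact ⟨rfl, rfl⟩
  | cons a t ih =>
    have hta := hl.getD_zero_le
    obtain ⟨hC, hN⟩ := ih hl.of_cons
    rw [rimList_cons, List.foldl_append, foldl_rimStep_map_prodMap]
    generalize (rimList t).foldl (rimStep p) (0, 0) = S at hC hN
    obtain ⟨N, C⟩ := S
    dsimp only at hC hN
    subst hC
    simp only [List.getD_cons_zero, List.tail_cons]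
    by_cases hb : t.getD 0 0 = 0
    · have hz := hl.of_cons.eq_zero_of_getD_eq_zero hb
      rw [hb, xSeq_sum_eq_zero fun b hb' => hz b (List.mem_of_mem_tail hb')] at hN
      rw [hb, show max 0 1 = 0 + 1 from rfl, foldl_rimStep_rowNodes p N (Nat.zero_le a),
        xSeq_sum_eq_zero hz]
      exact ⟨rfl, by simpa [add_comm] using hN.add_right a⟩
    rcases t with _ | ⟨b, t⟩
    · simp at hb
    simp only [List.getD_cons_zero, List.tail_cons] at hb hN hta ⊢
    have hstep : rimStep p (N, b) (0, b) = (N + if p ∣ N then 0 else 1, b) := by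
      unfold rimStep
      split_ifs <;> simp_all
    rw [max_eq_left (by omega), rowNodes_of_le hta, List.foldl_cons, hstep,
      foldl_rimStep_rowNodes p _ hta, xSeq_sum_cons]
    simp only [← hN.dvd_iff dvd_rfl, true_and]
    calc N + (if p ∣ N then 0 else 1) + (a - b)
        ≡ b + (xSeq p t).sum + (if p ∣ N then 0 else 1) + (a - b) [MOD p] :=
          (hN.add_right _).add_right _
      _ = a + ((if p ∣ N then 0 else 1) + (xSeq p t).sum) := by omega

theorem Jmap_head (hp : 0 < p) (hl : IsPartition (a :: t)) :
    (if (0, a) ∈ pRim p (a :: t) ∧ (0, a) ∉ segEnds p (a :: t) then a - 1 else a) =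
      a - if p ∣ a + (xSeq p t).sum then 0 else 1 := by
  rcases a with _ | a
  · split_ifs <;> rfl
  set R := (rimList t).map (Prod.map (· + 1) id) ++ rowNodes 0 (max (t.getD 0 0) 1) a
  have hR : rimList ((a + 1) :: t) = R ++ [(0, a + 1)] := by
    have := hl.getD_zero_le
    rw [rimList_cons, rowNodes_succ (by omega), List.append_assoc]
  have hqR : (0, a + 1) ∉ R := by
    simp only [R, List.mem_append, List.mem_map, mem_rowNodes, not_or, not_exists, not_and]
    exact ⟨fun q _ h => by simp [Prod.map] at h, by omega⟩
  have hinv := (foldl_rimStep_rimList (p := p) hl).2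
  rw [hR, List.foldl_append] at hinv
  set S := R.foldl (rimStep p) (0, 0)
  have hmem : (0, a + 1) ∈ pRim p ((a + 1) :: t) ↔ ¬ (p ∣ S.1 ∧ a + 1 ≤ S.2) := by
    simp [mem_pRim_iff hp hl, hR, mem_rimScan_append_singleton hqR, S]
  have hend : (0, a + 1) ∈ segEnds p ((a + 1) :: t) ↔ ¬ (p ∣ S.1 ∧ a + 1 ≤ S.2) ∧ p ∣ S.1 + 1 := by
    simp [mem_segEnds_iff hp hl, hR, mem_rimScan_append_singleton hqR, S]
  simp only [List.foldl_cons, List.foldl_nil, rimStep, List.getD_cons_zero, List.tail_cons] at hinv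
  split_ifs at hinv with hskip
  · rw [if_neg (by tauto), if_pos ((hinv.dvd_iff dvd_rfl).1 hskip.1)]
    rfl
  · have hdvd := hinv.dvd_iff dvd_rfl
    by_cases hd : p ∣ S.1 + 1
    · rw [if_neg (by tauto), if_pos (hdvd.1 hd)]
      rfl
    · rw [if_pos (by tauto), if_neg (mt hdvd.2 hd)]

theorem Jmap_cons (hp : 0 < p) (hl : IsPartition (a :: t)) :
    Jmap p (a :: t) = (a - if p ∣ a + (xSeq p t).sum then 0 else 1) :: Jmap p t := by
  rw [Jmap, List.length_cons, List.range_succ_eq_map, List.map_cons, List.map_map]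
  congr 1
  · exact Jmap_head hp hl
  · apply List.map_congr_left
    intro i _
    simp only [Function.comp_apply, Nat.succ_eq_add_one, List.getD_cons_succ,
      mem_pRim_cons_succ hp hl, mem_segEnds_cons_succ hp hl]

end Jmap

end Mullineux

open Mullineux in
/-- Recursive description of `J(λ)`: with `x_i = 1` iff `p ∤ λ_i + x_{i+1} + ⋯ + x_m`
(computed downwards from `i = m`, where `λ` has at most `m` parts), one has
`J(λ)_i = λ_i - x_i` for all `i`. -/
theorem Jmap_eq_sub_xSeq (p : ℕ) (hp : p.Prime) (l : List ℕ) (hl : IsPartition l) :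
    Jmap p l = List.zipWith (fun a x => a - x) l (xSeq p l) := by
  induction l with
  | nil => rfl
  | cons a t ih =>
    rw [Jmap_cons hp.pos hl, ih hl.of_cons]
    rfl
end

section
/- Let k be a field of characteristic ≠ 2 and define a symmetric bilinear form on Z^{m+n} by (ε_i, ε_j) = (−1)^{\bar i} δ_{ij}, where \bar i = 0 for i ≤ m and \bar i = 1 for i > m. Fix p ≥ 0 and order the odd roots β_1, ..., β_{mn} among {ε_i − ε_j : 1 ≤ i ≤ m < j ≤ m+n} so that β_i ≤ β_j in the dominance order implies i ≤ j. Starting from λ^{(0)} = λ and setting λ^{(i)} = λ^{(i−1)} if (λ^{(i−1)}, β_i) ≡ 0 (mod p) and λ^{(i)} = λ^{(i−1)} − β_i otherwise, the resulting weight λ^{(mn)} is independent of the choice of such an ordering. -/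
namespace Serganova

/-- One step of Serganova's algorithm: process the odd root `β = ε_a - ε_{m+b}`
(encoded by `r = (a, b) : Fin m × Fin n`).  Since `(λ, ε_a - ε_{m+b}) = λ_a + λ_{m+b}`,
the weight is replaced by `λ - β` exactly when `p ∤ λ_a + λ_{m+b}`. -/
def sergStep (p m n : ℕ) (lam : Fin (m+n) → ℤ) (r : Fin m × Fin n) : Fin (m+n) → ℤ :=
  let a : Fin (m+n) := Fin.castAdd n r.1
  let b : Fin (m+n) := Fin.natAdd m r.2
  if (p : ℤ) ∣ (lam a + lam b) then lam
  else Function.update (Function.update lam a (lam a - 1)) b (lam b + 1)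

/-- Serganova's algorithm run along the ordering `β_1, …, β_{mn}` of the odd
roots given by the enumeration `e`. -/
def sergRun (p m n : ℕ) (e : Fin (m*n) → Fin m × Fin n) (lam : Fin (m+n) → ℤ) :
    Fin (m+n) → ℤ :=
  (List.finRange (m*n)).foldl (fun l i => sergStep p m n l (e i)) lam

/-- `e` is an admissible ordering of the odd roots
`{ε_a - ε_{m+b} : a ∈ Fin m, b ∈ Fin n}`: it is a bijective enumeration, and whenever
`β_i ≤ β_j` in the dominance order (i.e. `(e j).1 ≤ (e i).1` and `(e i).2 ≤ (e j).2`,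
since `ε_a - ε_{m+b} ≤ ε_c - ε_{m+d}` iff `c ≤ a` and `b ≤ d`), we have `i ≤ j`. -/
def GoodOrder (m n : ℕ) (e : Fin (m*n) → Fin m × Fin n) : Prop :=
  Function.Bijective e ∧
    ∀ i j : Fin (m*n), ((e j).1 ≤ (e i).1 ∧ (e i).2 ≤ (e j).2) → i ≤ j

end Serganova

/-!
A step of the algorithm at the odd root `ε_a - ε_{m+b}` reads and changes only the
coordinates `a` and `m+b`, so steps at roots `(a, b)`, `(c, d)` with `a ≠ c` and `b ≠ d`
commute; roots that are incomparable in the dominance order are exactly of this kind.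
Two admissible orderings are linear extensions of the dominance order, and moving the
first root of one of them to the front of the other only passes it across roots
incomparable to it, so both runs compute the same fold.
-/

namespace List

variable {α β : Type*} {R : α → α → Prop} {f : β → α → β}

theorem foldl_append_cons_eq_foldl_append
    (hcomm : ∀ x y, R x y → R y x → ∀ b, f (f b x) y = f (f b y) x)
    {x : α} {u : List α} (hu : ∀ z ∈ u, R z x ∧ R x z) (v : List α) (b : β) :
    (u ++ x :: v).foldl f b = (u ++ v).foldl f (f b x) := by
  induction u generalizing b with
  | nil => rfl
  | cons a u ih =>
    obtain ⟨hax, hxa⟩ := hu a mem_cons_self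
    rw [cons_append, foldl_cons, ih (fun z hz => hu z (mem_cons_of_mem a hz)),
      cons_append, foldl_cons, hcomm x a hxa hax]

theorem Perm.foldl_eq_of_pairwise
    (hcomm : ∀ x y, R x y → R y x → ∀ b, f (f b x) y = f (f b y) x)
    {l₁ l₂ : List α} (hp : l₁ ~ l₂) (h₁ : l₁.Pairwise R) (h₂ : l₂.Pairwise R) (b : β) :
    l₁.foldl f b = l₂.foldl f b := by
  induction l₁ generalizing l₂ b with
  | nil => rw [hp.nil_eq]
  | cons x t ih =>
    obtain ⟨u, v, rfl⟩ := mem_iff_append.mp (hp.subset mem_cons_self)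
    have ht : t ~ u ++ v := (hp.trans perm_middle).cons_inv
    obtain ⟨hxt, ht_pw⟩ := pairwise_cons.mp h₁
    have hu : ∀ z ∈ u, R z x ∧ R x z := fun z hz =>
      ⟨(pairwise_append.mp h₂).2.2 z hz x mem_cons_self,
        hxt z (ht.symm.subset (mem_append_left v hz))⟩
    rw [foldl_append_cons_eq_foldl_append hcomm hu, foldl_cons]
    exact ih ht ht_pw (h₂.sublist ((sublist_cons_self x v).append_left u)) _

theorem perm_map_finRange_of_bijective {N : ℕ} {e e' : Fin N → α}
    (he : e.Bijective) (he' : e'.Bijective) :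
    ((finRange N).map e).Perm ((finRange N).map e') := by
  refine (perm_ext_iff_of_nodup ((nodup_finRange _).map he.injective)
    ((nodup_finRange _).map he'.injective)).mpr fun x => ?_
  simp only [mem_map, mem_finRange, true_and]
  exact iff_of_true (he.surjective x) (he'.surjective x)

end List

namespace Fin

theorem castAdd_ne_natAdd {m n : ℕ} (a : Fin m) (b : Fin n) : castAdd n a ≠ natAdd m b :=
  Fin.ne_of_lt (by simp only [lt_def, val_castAdd, val_natAdd]; omega)

end Fin

namespace Serganova

lemma sergStep_comm (p : ℕ) {m n : ℕ} {x y : Fin m × Fin n} (h₁ : x.1 ≠ y.1) (h₂ : x.2 ≠ y.2)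
    (lam : Fin (m+n) → ℤ) :
    sergStep p m n (sergStep p m n lam x) y = sergStep p m n (sergStep p m n lam y) x := by
  have hrow_col := @Fin.castAdd_ne_natAdd m n
  have hrows : Fin.castAdd n x.1 ≠ Fin.castAdd n y.1 := (Fin.castAdd_injective m n).ne h₁
  have hcols : Fin.natAdd m x.2 ≠ Fin.natAdd m y.2 := (Fin.natAdd_inj m).not.mpr h₂
  unfold sergStep
  by_cases hx : (p : ℤ) ∣ lam (Fin.castAdd n x.1) + lam (Fin.natAdd m x.2) <;>
    by_cases hy : (p : ℤ) ∣ lam (Fin.castAdd n y.1) + lam (Fin.natAdd m y.2) <;>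
    simp [hx, hy, hrow_col, hrow_col _ _ |>.symm, hrows, hrows.symm, hcols, hcols.symm,
      Function.update_comm]

lemma fst_ne_and_snd_ne_of_incomparable {m n : ℕ} {x y : Fin m × Fin n}
    (hxy : ¬ (x.1 ≤ y.1 ∧ y.2 ≤ x.2)) (hyx : ¬ (y.1 ≤ x.1 ∧ x.2 ≤ y.2)) :
    x.1 ≠ y.1 ∧ x.2 ≠ y.2 := by
  constructor <;> intro h <;> grind

lemma GoodOrder.pairwise {m n : ℕ} {e : Fin (m*n) → Fin m × Fin n} (he : GoodOrder m n e) :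
    ((List.finRange (m*n)).map e).Pairwise fun x y => ¬ (x.1 ≤ y.1 ∧ y.2 ≤ x.2) :=
  List.pairwise_map.mpr <| (List.pairwise_lt_finRange _).imp fun hij hle =>
    (he.2 _ _ hle).not_gt hij

lemma sergRun_eq_foldl (p m n : ℕ) (e : Fin (m*n) → Fin m × Fin n) (lam : Fin (m+n) → ℤ) :
    sergRun p m n e lam = ((List.finRange (m*n)).map e).foldl (sergStep p m n) lam :=
  (List.foldl_map ..).symm

end Serganova

open Serganova in
/-- Serganova's algorithm is independent of the chosen admissible ordering of the odd
roots: for any `p ≥ 0` and any two orderings of `{ε_i - ε_j : 1 ≤ i ≤ m < j ≤ m+n}`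
compatible with the dominance order, the resulting weight `λ^{(mn)}` is the same. -/
theorem sergRun_well_defined (p m n : ℕ) (lam : Fin (m+n) → ℤ)
    (e e' : Fin (m*n) → Fin m × Fin n)
    (he : GoodOrder m n e) (he' : GoodOrder m n e') :
    sergRun p m n e lam = sergRun p m n e' lam := by
  rw [sergRun_eq_foldl, sergRun_eq_foldl]
  refine (List.perm_map_finRange_of_bijective he.1 he'.1).foldl_eq_of_pairwise
    (fun x y hxy hyx lam => ?_) (GoodOrder.pairwise he) (GoodOrder.pairwise he') lam
  obtain ⟨h₁, h₂⟩ := fst_ne_and_snd_ne_of_incomparable hxy hyx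
  exact sergStep_comm p h₁ h₂ lam
end

section
/- Let k be a field of characteristic p ≠ 2 and d ≤ m. Then the endomorphism algebra of the tensor space V^{⊗d} (V the natural (m|n)-dimensional superspace) over the Schur superalgebra S(m|n,d) is isomorphic to the group algebra kS_d acting by signed place permutations. -/
namespace SchurSuper

def pairsF (d : ℕ) : Finset (Fin d × Fin d) := Finset.univ.filter (fun q => q.1 < q.2)

/-- `γ(ε, w) = ∏_{s<t, w⁻¹ s > w⁻¹ t} (-1)^{ε_s ε_t}`. -/
def gam {d : ℕ} (eps : Fin d → ZMod 2) (w : Equiv.Perm (Fin d)) : ℤ :=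
  ∏ q ∈ (pairsF d).filter (fun q => w⁻¹ q.2 < w⁻¹ q.1),
    (if eps q.1 = 1 ∧ eps q.2 = 1 then -1 else 1)

/-- `α(δ, ε) = ∏_{s<t} (-1)^{δ_s ε_t}`. -/
def alphaSgn {d : ℕ} (del eps : Fin d → ZMod 2) : ℤ :=
  ∏ q ∈ pairsF d, (if del q.1 = 1 ∧ eps q.2 = 1 then -1 else 1)

/-- parity of index -/
def par (m n : ℕ) (x : Fin (m+n)) : ZMod 2 := if (x : ℕ) < m then 0 else 1

/-- the set `I(m|n,d)` of multi-indices, indexing the basis of `V^{⊗d}` -/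
abbrev Idx (m n d : ℕ) := Fin d → Fin (m+n)

def epsOf (m n : ℕ) {d : ℕ} (i : Idx m n d) : Fin d → ZMod 2 := fun s => par m n (i s)

/-- The matrix of the signed place-permutation action of `w ∈ S_d` on `V^{⊗d}`
(in the basis `{v_i}_{i ∈ I(m|n,d)}`): `v_j · w = γ(ε_j, w) v_{j∘w}`. -/
def Pmat (k : Type*) [Field k] (m n d : ℕ) (w : Equiv.Perm (Fin d)) :
    Matrix (Idx m n d) (Idx m n d) k :=
  fun i j => if i = j ∘ w then ((gam (epsOf m n j) w : ℤ) : k) else 0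

/-- The Schur superalgebra `S(m|n,d) = A(m|n,d)^*`, realized concretely: an element is
the function `(i,j) ↦ x(T̃_{i,j})` on double indices, and such functions are exactly
those satisfying the super-symmetry `a(i·w, j·w) = γ(ε_i + ε_j, w)·a(i,j)`. -/
def SchurCoeffs (k : Type*) [Field k] (m n d : ℕ) : Set (Idx m n d → Idx m n d → k) :=
  {a | ∀ (i j : Idx m n d) (w : Equiv.Perm (Fin d)),
    a (i ∘ w) (j ∘ w) = ((gam (fun s => epsOf m n i s + epsOf m n j s) w : ℤ) : k) * a i j}

/-- The representation `ρ_d : S(m|n,d) → End_k(V^{⊗d})`, written in matrix form: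
the matrix coefficient of `ρ_d(a)` at `(i,j)` is `α(ε_i + ε_j, ε_j)·a(i,j)`. -/
def rhoMat (k : Type*) [Field k] (m n d : ℕ) (a : Idx m n d → Idx m n d → k) :
    Matrix (Idx m n d) (Idx m n d) k :=
  fun i j => ((alphaSgn (fun s => epsOf m n i s + epsOf m n j s) (epsOf m n j) : ℤ) : k)
    * a i j

end SchurSuper

/-!
The signed place permutations `P_w` form an anti-representation of `S_d` because the inversion
sign is a cocycle: `γ(ε, w w') = γ(ε, w) γ(ε ∘ w, w')`. They commute with `ρ(S(m|n,d))` by the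
super-symmetry of the coefficients together with the sign identity
`γ(δ, w) α(δ + ε, ε) = α((δ + ε) ∘ w, ε ∘ w) γ(δ + ε, w) γ(ε, w)`.

Since `d ≤ m` there is an injective multi-index `ℓ` with only even entries, and the column `ℓ`
separates permutations: `P_w (ℓ ∘ v, ℓ) = [v = w]`, which gives linear independence.
Conversely, if `θ` commutes with `ρ(S(m|n,d))`, test it against the orbit sum `ξ_{j,ℓ}`, the
element of `S(m|n,d)` supported on the `S_d`-orbit of `(j, ℓ)`: comparing the `(i, ℓ)` entries
of `θ ρ(ξ_{j,ℓ})` and `ρ(ξ_{j,ℓ}) θ` gives `θ (i, j) = ∑_u θ (ℓ ∘ u, ℓ) P_u (i, j)`.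
-/

namespace SchurSuper

variable {d : ℕ}

lemma mem_pairsF {q : Fin d × Fin d} : q ∈ pairsF d ↔ q.1 < q.2 := by
  simp [pairsF]

lemma prod_pairsF_perm {M : Type*} [CommMonoid M] (g : Fin d → Fin d → M)
    (w : Equiv.Perm (Fin d)) :
    ∏ q ∈ pairsF d, g (w q.1) (w q.2)
      = ∏ q ∈ pairsF d, if w⁻¹ q.2 < w⁻¹ q.1 then g q.2 q.1 else g q.1 q.2 := by
  refine Finset.prod_nbij'
    (fun q => if w q.1 < w q.2 then (w q.1, w q.2) else (w q.2, w q.1))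
    (fun q => if w⁻¹ q.1 < w⁻¹ q.2 then (w⁻¹ q.1, w⁻¹ q.2) else (w⁻¹ q.2, w⁻¹ q.1))
    ?_ ?_ ?_ ?_ ?_ <;>
  · rintro ⟨s, t⟩ hst
    simp only [mem_pairsF] at hst ⊢
    have hw := w.injective.ne hst.ne'
    have hw' := w⁻¹.injective.ne hst.ne'
    split_ifs <;> simp_all [lt_asymm, lt_of_le_of_ne]

lemma gam_eq_prod (eps : Fin d → ZMod 2) (w : Equiv.Perm (Fin d)) :
    gam eps w = ∏ q ∈ pairsF d,
      if w⁻¹ q.2 < w⁻¹ q.1 then (if eps q.1 = 1 ∧ eps q.2 = 1 then -1 else 1) else 1 :=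
  Finset.prod_filter _ _

lemma gam_mul (eps : Fin d → ZMod 2) (w w' : Equiv.Perm (Fin d)) :
    gam eps (w * w') = gam eps w * gam (eps ∘ w) w' := by
  have h := prod_pairsF_perm (fun s t => if w'⁻¹ (w⁻¹ t) < w'⁻¹ (w⁻¹ s) then
    (if eps s = 1 ∧ eps t = 1 then (-1 : ℤ) else 1) else 1) w
  rw [gam_eq_prod, gam_eq_prod, gam_eq_prod]
  simp only [mul_inv_rev, Equiv.Perm.mul_apply, Function.comp_apply, Equiv.Perm.coe_inv,
    Equiv.symm_apply_apply] at h ⊢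
  rw [h, ← Finset.prod_mul_distrib]
  refine Finset.prod_congr rfl fun ⟨s, t⟩ hst => ?_
  have hne : w'.symm (w.symm s) ≠ w'.symm (w.symm t) := by
    simpa using (mem_pairsF.mp hst).ne
  split_ifs <;> grind

lemma gam_one (eps : Fin d → ZMod 2) : gam eps 1 = 1 := by
  rw [gam_eq_prod]
  exact Finset.prod_eq_one fun q hq => by simp [lt_asymm (mem_pairsF.mp hq)]

lemma gam_zero (w : Equiv.Perm (Fin d)) : gam 0 w = 1 :=
  Finset.prod_eq_one fun _ _ => by simp

lemma alphaSgn_zero_right (del : Fin d → ZMod 2) : alphaSgn del 0 = 1 :=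
  Finset.prod_eq_one fun _ _ => by simp

lemma gam_mul_alphaSgn (del eps : Fin d → ZMod 2) (w : Equiv.Perm (Fin d)) :
    gam del w * alphaSgn (fun s => del s + eps s) eps
      = alphaSgn (fun s => del (w s) + eps (w s)) (eps ∘ w)
          * (gam (fun s => del s + eps s) w * gam eps w) := by
  have h := prod_pairsF_perm (fun s t => if del s + eps s = 1 ∧ eps t = 1 then (-1 : ℤ) else 1) w
  rw [gam_eq_prod, gam_eq_prod, gam_eq_prod, alphaSgn, alphaSgn, Function.comp_def, h,
    ← Finset.prod_mul_distrib, ← Finset.prod_mul_distrib, ← Finset.prod_mul_distrib]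
  refine Finset.prod_congr rfl fun q _ => ?_
  by_cases hinv : w⁻¹ q.2 < w⁻¹ q.1 <;> simp only [hinv, if_true, if_false, one_mul, mul_one]
  generalize del q.1 = x, del q.2 = y, eps q.1 = u, eps q.2 = v
  revert x y u v
  decide

variable {k : Type*} [Field k] {m n : ℕ}

@[simp]
lemma epsOf_comp (i : Idx m n d) (f : Fin d → Fin d) : epsOf m n (i ∘ f) = epsOf m n i ∘ f :=
  rfl

lemma comp_perm_eq_comp_perm_iff {α : Type*} (i j : Fin d → α) (w : Equiv.Perm (Fin d)) :
    i ∘ w = j ∘ w ↔ i = j :=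
  w.surjective.injective_comp_right.eq_iff

lemma Pmat_comp_apply (w : Equiv.Perm (Fin d)) (x j : Idx m n d) :
    Pmat k m n d w (x ∘ w) j = if x = j then (gam (epsOf m n j) w : k) else 0 := by
  simp only [Pmat, comp_perm_eq_comp_perm_iff]

lemma Pmat_mul (w w' : Equiv.Perm (Fin d)) :
    Pmat k m n d (w * w') = Pmat k m n d w' * Pmat k m n d w := by
  ext i j
  rw [Matrix.mul_apply, Finset.sum_eq_single (j ∘ w)]
  · simp only [Pmat, if_true, Equiv.Perm.coe_mul, gam_mul, epsOf_comp, Function.comp_assoc]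
    split_ifs <;> push_cast <;> ring
  · intro l _ hl
    simp [Pmat, hl]
  · simp

lemma Pmat_mul_rhoMat {a : Idx m n d → Idx m n d → k} (ha : a ∈ SchurCoeffs k m n d)
    (w : Equiv.Perm (Fin d)) :
    Pmat k m n d w * rhoMat k m n d a = rhoMat k m n d a * Pmat k m n d w := by
  ext i j
  obtain ⟨x, rfl⟩ : ∃ x, i = x ∘ w := ⟨i ∘ w.symm, by ext; simp⟩
  rw [Matrix.mul_apply, Matrix.mul_apply, Finset.sum_eq_single x, Finset.sum_eq_single (j ∘ w)]
  · have hsign := congrArg (Int.cast : ℤ → k) (gam_mul_alphaSgn (epsOf m n x) (epsOf m n j) w)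
    push_cast at hsign
    simp only [Pmat_comp_apply, if_true, rhoMat, ha x j w, epsOf_comp, Function.comp_apply]
    linear_combination a x j * hsign
  · intro l _ hl
    simp [Pmat, hl]
  · simp
  · intro l _ hl
    simp [Pmat_comp_apply, Ne.symm hl]
  · simp

lemma sum_smul_Pmat_mul_rhoMat {a : Idx m n d → Idx m n d → k} (ha : a ∈ SchurCoeffs k m n d)
    (c : Equiv.Perm (Fin d) → k) :
    (∑ w, c w • Pmat k m n d w) * rhoMat k m n d a
      = rhoMat k m n d a * ∑ w, c w • Pmat k m n d w := by
  simp only [Finset.sum_mul, Finset.mul_sum, Matrix.smul_mul, Matrix.mul_smul,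
    Pmat_mul_rhoMat ha]

lemma exists_injective_epsOf_eq_zero (hd : d ≤ m) :
    ∃ l : Idx m n d, Function.Injective l ∧ epsOf m n l = 0 :=
  ⟨Fin.castLE (hd.trans (Nat.le_add_right m n)), Fin.castLE_injective _,
    funext fun s => by simp [epsOf, par, s.isLt.trans_le hd]⟩

lemma comp_perm_eq_comp_perm_iff_of_injective {l : Idx m n d} (hl : Function.Injective l)
    (v w : Equiv.Perm (Fin d)) :
    l ∘ v = l ∘ w ↔ v = w :=
  hl.comp_left.eq_iff.trans DFunLike.coe_fn_eq

lemma Pmat_apply_comp_self {l : Idx m n d} (hl : Function.Injective l) (hε : epsOf m n l = 0)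
    (v w : Equiv.Perm (Fin d)) :
    Pmat k m n d w (l ∘ v) l = if v = w then 1 else 0 := by
  simp [Pmat, comp_perm_eq_comp_perm_iff_of_injective hl, hε, gam_zero]

lemma sum_smul_Pmat_apply_comp_self {l : Idx m n d} (hl : Function.Injective l)
    (hε : epsOf m n l = 0) (c : Equiv.Perm (Fin d) → k) (v : Equiv.Perm (Fin d)) :
    (∑ w, c w • Pmat k m n d w) (l ∘ v) l = c v := by
  simp [Matrix.sum_apply, Pmat_apply_comp_self hl hε]

variable (k) in
def orbitCoeff (j l : Idx m n d) : Idx m n d → Idx m n d → k := fun x y =>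
  ∑ u : Equiv.Perm (Fin d),
    if x = j ∘ u ∧ y = l ∘ u then (gam (fun s => epsOf m n j s + epsOf m n l s) u : k) else 0

lemma orbitCoeff_mem_schurCoeffs (j l : Idx m n d) : orbitCoeff k j l ∈ SchurCoeffs k m n d := by
  intro x y w
  rw [orbitCoeff, orbitCoeff, Finset.mul_sum,
    ← Equiv.sum_comp (Equiv.mulRight w)]
  refine Finset.sum_congr rfl fun v _ => ?_
  simp only [Equiv.coe_mulRight, Equiv.Perm.coe_mul, ← Function.comp_assoc,
    comp_perm_eq_comp_perm_iff]
  split_ifs with h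
  · obtain ⟨rfl, rfl⟩ := h
    rw [gam_mul, Int.cast_mul, mul_comm]
    rfl
  · simp

lemma orbitCoeff_apply_self_right {l : Idx m n d} (hl : Function.Injective l) (j x : Idx m n d) :
    orbitCoeff k j l x l = if x = j then 1 else 0 := by
  rw [orbitCoeff, Finset.sum_eq_single 1]
  · simp [gam_one]
  · intro u _ hu
    rw [if_neg]
    rintro ⟨-, h⟩
    exact hu ((comp_perm_eq_comp_perm_iff_of_injective hl 1 u).mp h).symm
  · simp

lemma mul_rhoMat_orbitCoeff_apply {l : Idx m n d} (hl : Function.Injective l)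
    (hε : epsOf m n l = 0) (θ : Matrix (Idx m n d) (Idx m n d) k) (i j : Idx m n d) :
    (θ * rhoMat k m n d (orbitCoeff k j l)) i l = θ i j := by
  simp [Matrix.mul_apply, rhoMat, orbitCoeff_apply_self_right hl, hε, alphaSgn_zero_right]

lemma rhoMat_orbitCoeff_mul_apply {l : Idx m n d} (hε : epsOf m n l = 0)
    (θ : Matrix (Idx m n d) (Idx m n d) k) (i j y : Idx m n d) :
    (rhoMat k m n d (orbitCoeff k j l) * θ) i y
      = ∑ u : Equiv.Perm (Fin d), θ (l ∘ u) y * Pmat k m n d u i j := by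
  simp only [Matrix.mul_apply, rhoMat, orbitCoeff, Finset.mul_sum, Finset.sum_mul]
  rw [Finset.sum_comm]
  refine Finset.sum_congr rfl fun u _ => ?_
  rw [Finset.sum_eq_single (l ∘ u)]
  · have hεu : epsOf m n (l ∘ u) = 0 := by rw [epsOf_comp, hε, Pi.zero_comp]
    have hεj : (fun s => epsOf m n j s + epsOf m n l s) = epsOf m n j := by simp [hε]
    rw [hεu, hεj, alphaSgn_zero_right, Pmat]
    split_ifs <;> simp_all [mul_comm]
  · intro y _ hy
    simp [hy]
  · simp

lemma eq_sum_smul_Pmat_of_commute {l : Idx m n d} (hl : Function.Injective l)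
    (hε : epsOf m n l = 0) {θ : Matrix (Idx m n d) (Idx m n d) k}
    (hθ : ∀ a ∈ SchurCoeffs k m n d, θ * rhoMat k m n d a = rhoMat k m n d a * θ) :
    θ = ∑ u : Equiv.Perm (Fin d), θ (l ∘ u) l • Pmat k m n d u := by
  ext i j
  have h := congrFun₂ (hθ _ (orbitCoeff_mem_schurCoeffs j l)) i l
  rw [mul_rhoMat_orbitCoeff_apply hl hε, rhoMat_orbitCoeff_mul_apply hε] at h
  simp [h, Matrix.sum_apply]

end SchurSuper

open SchurSuper in
theorem endomorphism_algebra_eq_group_algebra_general (k : Type) [Field k]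
    (m n d : ℕ) (hd : d ≤ m) :
    (∀ w w' : Equiv.Perm (Fin d),
        Pmat k m n d (w * w') = Pmat k m n d w' * Pmat k m n d w) ∧
    (∀ c : Equiv.Perm (Fin d) → k,
        (∑ w : Equiv.Perm (Fin d), c w • Pmat k m n d w) = 0 → c = 0) ∧
    (∀ θ : Matrix (Idx m n d) (Idx m n d) k,
        (∀ a ∈ SchurCoeffs k m n d, θ * rhoMat k m n d a = rhoMat k m n d a * θ) ↔
          ∃ c : Equiv.Perm (Fin d) → k,
            θ = ∑ w : Equiv.Perm (Fin d), c w • Pmat k m n d w) := by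
  obtain ⟨l, hl, hε⟩ := exists_injective_epsOf_eq_zero (n := n) hd
  refine ⟨Pmat_mul, fun c hc => ?_, fun θ => ⟨fun hθ => ?_, ?_⟩⟩
  · funext v
    simpa [hc] using (sum_smul_Pmat_apply_comp_self hl hε c v).symm
  · exact ⟨_, eq_sum_smul_Pmat_of_commute hl hε hθ⟩
  · rintro ⟨c, rfl⟩ a ha
    exact sum_smul_Pmat_mul_rhoMat ha c

open SchurSuper in
/-- Double centralizer property: for `d ≤ m`, the endomorphism algebra of the tensor
space `V^{⊗d}` over the Schur superalgebra `S(m|n,d)` is isomorphic to the group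
algebra `kS_d` acting by signed place permutations: `w ↦ Pmat w` is an (anti-)
homomorphic embedding of `kS_d` into `End_k(V^{⊗d})` whose image is exactly the
centralizer of the image of `S(m|n,d)`. -/
theorem endomorphism_algebra_eq_group_algebra (k : Type) [Field k]
    (hk : ringChar k ≠ 2) (m n d : ℕ) (hd : d ≤ m) :
    (∀ w w' : Equiv.Perm (Fin d),
        Pmat k m n d (w * w') = Pmat k m n d w' * Pmat k m n d w) ∧
    (∀ c : Equiv.Perm (Fin d) → k,
        (∑ w : Equiv.Perm (Fin d), c w • Pmat k m n d w) = 0 → c = 0) ∧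
    (∀ θ : Matrix (Idx m n d) (Idx m n d) k,
        (∀ a ∈ SchurCoeffs k m n d, θ * rhoMat k m n d a = rhoMat k m n d a * θ) ↔
          ∃ c : Equiv.Perm (Fin d) → k,
            θ = ∑ w : Equiv.Perm (Fin d), c w • Pmat k m n d w) :=
  endomorphism_algebra_eq_group_algebra_general k m n d hd
end

section
/- Let k be a field of characteristic p ≠ 2. The algebra homomorphism ρ_d from the Schur superalgebra S(m|n,d) to End_k(V^{⊗d}) is injective, and its image lies in the centralizer of the signed place-permutation action of S_d; moreover the image of S(m|n,d) equals End_{kS_d}(V^{⊗d}). -/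
/-!
All signs are powers of `-1 : ℤˣ` with exponents in `ZMod 2`: `γ(ε, w)` has exponent
`∑_{(s,t) inversion of w} ε_s ε_t` and `α(δ, ε)` has exponent `∑_{s<t} δ_s ε_t`.
Since `α² = 1`, `ρ` is an involution on coefficient functions, hence injective.
A matrix `θ` commutes with every signed place permutation iff
`θ(i·w, j·w) = γ(ε_i, w) γ(ε_j, w) θ(i, j)`, so the other two claims reduce to the sign identity
`α(ε_{i·w} + ε_{j·w}, ε_{j·w}) γ(ε_i, w) γ(ε_j, w) α(ε_i + ε_j, ε_j) = γ(ε_i + ε_j, w)`.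
In the exponent this is a mod-2 identity, obtained by reindexing the sum over pairs `s < t`
along `w`: the pairs whose order `w` reverses are exactly the inversions of `w`.
-/

namespace SchurSuper

open Finset Equiv

section Signs

variable {d : ℕ}

def inversions (w : Perm (Fin d)) : Finset (Fin d × Fin d) :=
  (pairsF d).filter (fun q => w⁻¹ q.2 < w⁻¹ q.1)

lemma sum_pairsF_comp_perm {M : Type*} [AddCommMonoid M] (w : Perm (Fin d))
    (F : Fin d → Fin d → M) :
    ∑ q ∈ pairsF d, F (w q.1) (w q.2)
      = ∑ q ∈ (pairsF d).filter (fun q => ¬ w⁻¹ q.2 < w⁻¹ q.1), F q.1 q.2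
        + ∑ q ∈ inversions w, F q.2 q.1 := by
  rw [← sum_filter_add_sum_filter_not (pairsF d) (fun q => w q.1 < w q.2)]
  congr 1
  · refine sum_equiv (w.prodCongr w) (fun q => ?_) (fun _ _ => rfl)
    simp only [pairsF, mem_filter, mem_univ, true_and, prodCongr_apply, Prod.map,
      Perm.coe_inv, symm_apply_apply, not_lt]
    exact ⟨fun h => ⟨h.2, h.1.le⟩, fun h => ⟨lt_of_le_of_ne h.2 fun e => h.1.ne (by rw [e]), h.1⟩⟩
  · refine sum_equiv ((w.prodCongr w).trans (prodComm _ _)) (fun q => ?_) (fun _ _ => rfl)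
    simp only [pairsF, inversions, mem_filter, mem_univ, true_and, trans_apply, prodCongr_apply,
      Prod.map, prodComm_apply, Prod.swap, Perm.coe_inv, symm_apply_apply, not_lt]
    exact ⟨fun h => ⟨lt_of_le_of_ne h.2 (w.injective.ne h.1.ne'), h.1⟩, fun h => ⟨h.2, h.1.le⟩⟩

lemma sum_pairsF_comp_perm_sub {M : Type*} [AddCommGroup M] (w : Perm (Fin d))
    (F : Fin d → Fin d → M) :
    ∑ q ∈ pairsF d, F (w q.1) (w q.2) - ∑ q ∈ pairsF d, F q.1 q.2
      = ∑ q ∈ inversions w, (F q.2 q.1 - F q.1 q.2) := by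
  rw [sum_pairsF_comp_perm, ← sum_filter_not_add_sum_filter (pairsF d)
    (fun q => w⁻¹ q.2 < w⁻¹ q.1), sum_sub_distrib, inversions]
  abel

lemma ite_and_eq_uzpow (x y : ZMod 2) :
    (if x = 1 ∧ y = 1 then (-1 : ℤ) else 1) = ((-1 : ℤˣ) ^ (x * y) : ℤˣ) := by
  fin_cases x <;> fin_cases y <;> rfl

lemma prod_uzpow {ι : Type*} (s : Finset ι) (u : ℤˣ) (f : ι → ZMod 2) :
    ∏ i ∈ s, u ^ f i = u ^ ∑ i ∈ s, f i := by
  induction s using Finset.cons_induction with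
  | empty => simp
  | cons a s ha ih => rw [prod_cons, sum_cons, ih, uzpow_add]

lemma gam_eq_uzpow (ε : Fin d → ZMod 2) (w : Perm (Fin d)) :
    gam ε w = ((-1 : ℤˣ) ^ ∑ q ∈ inversions w, ε q.1 * ε q.2 : ℤˣ) := by
  simp only [gam, ite_and_eq_uzpow, ← Units.coe_prod, prod_uzpow, inversions]

lemma alphaSgn_eq_uzpow (δ ε : Fin d → ZMod 2) :
    alphaSgn δ ε = ((-1 : ℤˣ) ^ ∑ q ∈ pairsF d, δ q.1 * ε q.2 : ℤˣ) := by
  simp only [alphaSgn, ite_and_eq_uzpow, ← Units.coe_prod, prod_uzpow]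

lemma sum_pairsF_comp_add_sum_inversions (δ ε : Fin d → ZMod 2) (w : Perm (Fin d)) :
    ∑ q ∈ pairsF d, (δ (w q.1) + ε (w q.1)) * ε (w q.2)
      + ∑ q ∈ inversions w, δ q.1 * δ q.2 + ∑ q ∈ inversions w, ε q.1 * ε q.2
      + ∑ q ∈ pairsF d, (δ q.1 + ε q.1) * ε q.2
      = ∑ q ∈ inversions w, (δ q.1 + ε q.1) * (δ q.2 + ε q.2) := by
  have h := sum_pairsF_comp_perm_sub w (fun s t => (δ s + ε s) * ε t)
  have hpair (q : Fin d × Fin d) : (δ q.2 + ε q.2) * ε q.1 - (δ q.1 + ε q.1) * ε q.2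
      + δ q.1 * δ q.2 + ε q.1 * ε q.2 = (δ q.1 + ε q.1) * (δ q.2 + ε q.2) := by
    grind
  rw [← sum_congr rfl fun q _ => hpair q, sum_add_distrib, sum_add_distrib, ← h]
  grind

lemma alphaSgn_mul_gam_mul_gam_mul_alphaSgn (δ ε : Fin d → ZMod 2) (w : Perm (Fin d)) :
    alphaSgn (fun s => δ (w s) + ε (w s)) (fun s => ε (w s)) * gam δ w * gam ε w
      * alphaSgn (fun s => δ s + ε s) ε = gam (fun s => δ s + ε s) w := by
  simp only [alphaSgn_eq_uzpow, gam_eq_uzpow, ← Units.val_mul, ← uzpow_add,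
    sum_pairsF_comp_add_sum_inversions]

lemma gam_mul_self (ε : Fin d → ZMod 2) (w : Perm (Fin d)) : gam ε w * gam ε w = 1 := by
  rw [gam_eq_uzpow, ← Units.val_mul, Int.units_mul_self, Units.val_one]

lemma alphaSgn_mul_self (δ ε : Fin d → ZMod 2) : alphaSgn δ ε * alphaSgn δ ε = 1 := by
  rw [alphaSgn_eq_uzpow, ← Units.val_mul, Int.units_mul_self, Units.val_one]

end Signs

section Matrices

variable {k : Type*} [Field k] {m n d : ℕ}

lemma mul_Pmat_apply (θ : Matrix (Idx m n d) (Idx m n d) k) (w : Perm (Fin d))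
    (i j : Idx m n d) :
    (θ * Pmat k m n d w) i j = θ i (j ∘ w) * (gam (epsOf m n j) w : k) := by
  simp [Matrix.mul_apply, Pmat]

lemma Pmat_mul_apply (θ : Matrix (Idx m n d) (Idx m n d) k) (w : Perm (Fin d))
    (i j : Idx m n d) :
    (Pmat k m n d w * θ) i j = (gam (epsOf m n (i ∘ ⇑w⁻¹)) w : k) * θ (i ∘ ⇑w⁻¹) j := by
  have hiff (l : Idx m n d) : i = l ∘ w ↔ l = i ∘ ⇑w⁻¹ := by
    constructor <;> rintro rfl <;> funext s <;> simp
  simp [Matrix.mul_apply, Pmat, hiff]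

lemma commute_Pmat_iff (θ : Matrix (Idx m n d) (Idx m n d) k) (w : Perm (Fin d)) :
    θ * Pmat k m n d w = Pmat k m n d w * θ ↔ ∀ i j : Idx m n d,
      θ (i ∘ w) (j ∘ w) = (gam (epsOf m n i) w : k) * (gam (epsOf m n j) w : k) * θ i j := by
  have hγ (j : Idx m n d) : (gam (epsOf m n j) w : k) * (gam (epsOf m n j) w : k) = 1 := by
    rw [← Int.cast_mul, gam_mul_self, Int.cast_one]
  rw [← Matrix.ext_iff]
  constructor
  · intro h i j
    have hij := h (i ∘ w) j
    rw [mul_Pmat_apply, Pmat_mul_apply, Function.comp_assoc, ← Perm.coe_mul, mul_inv_cancel,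
      Perm.coe_one, Function.comp_id] at hij
    linear_combination (gam (epsOf m n j) w : k) * hij - θ (i ∘ w) (j ∘ w) * hγ j
  · intro h i j
    have hij := h (i ∘ ⇑w⁻¹) j
    rw [Function.comp_assoc, ← Perm.coe_mul, inv_mul_cancel, Perm.coe_one,
      Function.comp_id] at hij
    rw [mul_Pmat_apply, Pmat_mul_apply, hij]
    linear_combination (gam (epsOf m n (i ∘ ⇑w⁻¹)) w : k) * θ (i ∘ ⇑w⁻¹) j * hγ j

lemma rhoMat_involutive : Function.Involutive (rhoMat k m n d) := by
  intro a
  funext i j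
  have hα := alphaSgn_mul_self (fun s => epsOf m n i s + epsOf m n j s) (epsOf m n j)
  simp only [rhoMat, ← mul_assoc, ← Int.cast_mul, hα, Int.cast_one, one_mul]

lemma commute_Pmat_rhoMat_iff (a : Idx m n d → Idx m n d → k) :
    (∀ w : Perm (Fin d), rhoMat k m n d a * Pmat k m n d w = Pmat k m n d w * rhoMat k m n d a)
      ↔ a ∈ SchurCoeffs k m n d := by
  simp only [commute_Pmat_iff, SchurCoeffs]
  rw [forall_comm]
  refine forall_congr' fun i => ?_
  rw [forall_comm]
  refine forall_congr' fun j => forall_congr' fun w => ?_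
  set δ := epsOf m n i
  set ε := epsOf m n j
  set α' : k := ((alphaSgn (fun s => δ (w s) + ε (w s)) (fun s => ε (w s)) : ℤ) : k) with hα'_def
  set α : k := ((alphaSgn (fun s => δ s + ε s) ε : ℤ) : k) with hα_def
  have hsign : α' * gam δ w * gam ε w * α = gam (fun s => δ s + ε s) w := by
    simp only [hα'_def, hα_def, ← Int.cast_mul, alphaSgn_mul_gam_mul_gam_mul_alphaSgn]
  have hα' : α' * α' = 1 := by
    rw [hα'_def, ← Int.cast_mul, alphaSgn_mul_self, Int.cast_one]
  change α' * a (i ∘ w) (j ∘ w) = gam δ w * gam ε w * (α * a i j) ↔ _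
  constructor <;> intro h
  · linear_combination α' * h - a (i ∘ w) (j ∘ w) * hα' + a i j * hsign
  · linear_combination α' * h - α' * a i j * hsign + gam δ w * gam ε w * α * a i j * hα'

end Matrices

end SchurSuper

open SchurSuper in
theorem rho_injective_image_eq_centralizer_general (k : Type) [Field k]
    (m n d : ℕ) :
    (Set.InjOn (rhoMat k m n d) (SchurCoeffs k m n d)) ∧
    (∀ a ∈ SchurCoeffs k m n d, ∀ w : Equiv.Perm (Fin d),
        rhoMat k m n d a * Pmat k m n d w = Pmat k m n d w * rhoMat k m n d a) ∧
    (∀ θ : Matrix (Idx m n d) (Idx m n d) k,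
        (∀ w : Equiv.Perm (Fin d), θ * Pmat k m n d w = Pmat k m n d w * θ) →
        ∃ a ∈ SchurCoeffs k m n d, rhoMat k m n d a = θ) :=
  ⟨rhoMat_involutive.injective.injOn,
    fun a ha => (commute_Pmat_rhoMat_iff a).2 ha,
    fun θ hθ => by
      obtain ⟨a, rfl⟩ := rhoMat_involutive.surjective θ
      exact ⟨a, (commute_Pmat_rhoMat_iff a).1 hθ, rfl⟩⟩

open SchurSuper in
/-- The representation `ρ_d : S(m|n,d) → End_k(V^{⊗d})` is injective, its image lies in
the centralizer of the signed place-permutation action of `S_d`, and its image equals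
`End_{kS_d}(V^{⊗d})`. -/
theorem rho_injective_image_eq_centralizer (k : Type) [Field k]
    (hk : ringChar k ≠ 2) (m n d : ℕ) :
    (Set.InjOn (rhoMat k m n d) (SchurCoeffs k m n d)) ∧
    (∀ a ∈ SchurCoeffs k m n d, ∀ w : Equiv.Perm (Fin d),
        rhoMat k m n d a * Pmat k m n d w = Pmat k m n d w * rhoMat k m n d a) ∧
    (∀ θ : Matrix (Idx m n d) (Idx m n d) k,
        (∀ w : Equiv.Perm (Fin d), θ * Pmat k m n d w = Pmat k m n d w * θ) →
        ∃ a ∈ SchurCoeffs k m n d, rhoMat k m n d a = θ) :=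
  rho_injective_image_eq_centralizer_general k m n d
end
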